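/- arXiv:2304.10552 — 9 statements merged into one kernel-verified Lean document; each statement's English description precedes it below -/
import Mathlib

section
/- Let d ≥ 2 and let σ : ℝ → ℝ be locally integrable and such that there is no polynomial P of degree at most d−2 with σ = P almost everywhere (Assumption 1). Let (x_i, y_i), i = 1,…,d, be a data set with x_i ∈ ℝ^p pairwise distinct and y_i ∈ ℝ. Then for every h ≥ d there exist a matrix W ∈ ℝ^{h×p}, vectors v ∈ ℝ^h, b ∈ ℝ^h and a scalar b' ∈ ℝ such that the shallow neural network f(x) = v^T σ(Wx − b) − b' satisfies f(x_i) = y_i for all i = 1,…,d. -/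
/-!
Project the data onto a direction `a` separating the inputs, so that they become distinct reals
`t₁, …, t_d`; a first layer with rows `wⱼ • a` makes the network output `∑ⱼ vⱼ σ(wⱼ tᵢ − bⱼ)`, so
it suffices that the neuron vectors `(σ(w tᵢ − b))ᵢ` span `ℝ^d` (then `d` of them, and `b' = 0`,
suffice). Otherwise some `c ≠ 0` satisfies `∑ᵢ cᵢ σ(w tᵢ − b) = 0` for all `w, b`. This relation
survives mollification `ψ = φ ⋆ σ` and differentiation in `w` and `b`, giving
`∑ᵢ cᵢ tᵢᵏ ψ⁽ᵈ⁻¹⁾(w tᵢ − b) = 0` for all `k < d`; at `w = 0` the Vandermonde matrix forces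
`ψ⁽ᵈ⁻¹⁾ = 0`. So every mollification of `σ` is a polynomial of degree `< d − 1`, and hence so is
their almost everywhere limit `σ`.
-/

open MeasureTheory Polynomial Filter Module
open scoped Topology Convolution

namespace Polynomial

variable {R : Type*} [CommRing R] [IsDomain R] [CharZero R]

theorem degree_lt_succ_of_degree_derivative_lt {p : R[X]} {n : ℕ}
    (h : (derivative p).degree < n) : p.degree < (n + 1 : ℕ) := by
  rw [degree_lt_iff_coeff_zero] at h ⊢
  rintro (_ | m) hm
  · omega
  · have := h m (by omega)
    rw [coeff_derivative] at this
    exact (mul_eq_zero.mp this).resolve_right (by exact_mod_cast m.succ_ne_zero)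

theorem exists_derivative_eq {K : Type*} [Field K] [CharZero K] (q : K[X]) :
    ∃ p : K[X], derivative p = q := by
  induction q using Polynomial.induction_on' with
  | add q₁ q₂ h₁ h₂ =>
    obtain ⟨p₁, rfl⟩ := h₁
    obtain ⟨p₂, rfl⟩ := h₂
    exact ⟨p₁ + p₂, derivative_add⟩
  | monomial n a =>
    refine ⟨monomial (n + 1) (a / (n + 1)), ?_⟩
    rw [derivative_monomial, Nat.add_sub_cancel, Nat.cast_add_one,
      div_mul_cancel₀ _ (Nat.cast_add_one_ne_zero n)]

theorem exists_degree_lt_eq_eval_of_tendsto {K ι : Type*} [Field K]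
    [TopologicalSpace K] [IsTopologicalRing K] [T2Space K] {l : Filter ι} [l.NeBot] {m : ℕ}
    {S : Set K} (hS : S.Infinite) {P : ι → K[X]} (hP : ∀ i, (P i).degree < m) {f : K → K}
    (hf : ∀ x ∈ S, Tendsto (fun i => (P i).eval x) l (𝓝 (f x))) :
    ∃ Q : K[X], Q.degree < m ∧ ∀ x ∈ S, f x = Q.eval x := by
  classical
  set z : Fin m → K := fun j => hS.natEmbedding S j
  have hz : Set.InjOn z (Finset.univ : Finset (Fin m)) :=
    (Subtype.val_injective.comp ((hS.natEmbedding S).injective.comp Fin.val_injective)).injOn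
  have heval : ∀ (r : Fin m → K) x, (Lagrange.interpolate Finset.univ z r).eval x =
      ∑ j, r j * (Lagrange.basis Finset.univ z j).eval x := fun r x => by
    simp [Lagrange.interpolate_apply, eval_finsetSum]
  refine ⟨Lagrange.interpolate Finset.univ z (fun j => f (z j)), ?_, fun x hx => ?_⟩
  · simpa using Lagrange.degree_interpolate_lt (fun j => f (z j)) hz
  · have hP_eq : ∀ i, (P i).eval x =
        ∑ j, (P i).eval (z j) * (Lagrange.basis Finset.univ z j).eval x := fun i => by
      rw [← heval, ← Lagrange.eq_interpolate hz (by simpa using hP i)]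
    refine tendsto_nhds_unique (hf x hx) ?_
    simp only [hP_eq, heval]
    exact tendsto_finsetSum _ fun j _ => (hf (z j) (hS.natEmbedding S j).2).mul_const _

end Polynomial

theorem exists_degree_lt_eq_eval_of_iteratedDeriv_eq_zero {n : ℕ} {f : ℝ → ℝ}
    (hf : ContDiff ℝ n f) (h : iteratedDeriv n f = 0) :
    ∃ P : ℝ[X], P.degree < n ∧ ∀ x, f x = P.eval x := by
  induction n generalizing f with
  | zero => exact ⟨0, by simp, fun x => by simpa using congrFun h x⟩
  | succ n ih =>
    obtain ⟨hf_diff, -, hf'⟩ := contDiff_succ_iff_deriv.mp (by push_cast at hf; exact hf)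
    obtain ⟨Q, hQ_deg, hQ⟩ := ih hf' (by rwa [← iteratedDeriv_succ'])
    obtain ⟨R, rfl⟩ := exists_derivative_eq Q
    have hderiv : ∀ x, HasDerivAt (fun y => f y - R.eval y) 0 x := fun x => by
      simpa [hQ x] using (hf_diff x).hasDerivAt.fun_sub (R.hasDerivAt x)
    have hconst : ∀ x, f x - R.eval x = f 0 - R.eval 0 := fun x =>
      is_const_of_deriv_eq_zero (fun y => (hderiv y).differentiableAt)
        (fun y => (hderiv y).deriv) x 0
    refine ⟨R + C (f 0 - R.eval 0), degree_lt_succ_of_degree_derivative_lt ?_, fun x => ?_⟩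
    · simpa using hQ_deg
    · simp only [eval_add, eval_C]
      linarith [hconst x]

theorem MeasureTheory.infinite_setOf_of_ae {α : Type*} [MeasurableSpace α] {μ : Measure α}
    [NullSingletonClass μ] [NeZero μ] {p : α → Prop} (h : ∀ᵐ x ∂μ, p x) :
    {x | p x}.Infinite := fun hfin =>
  let ⟨_, hx, hx'⟩ := (h.and (measure_eq_zero_iff_ae_notMem.mp (hfin.measure_zero μ))).exists
  hx' hx

noncomputable def mollifier (n : ℕ) : ContDiffBump (0 : ℝ) :=
  ⟨(n + 1 : ℝ)⁻¹, 2 * (n + 1 : ℝ)⁻¹, by positivity, by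
    linarith [inv_pos.mpr (Nat.cast_add_one_pos (α := ℝ) n)]⟩

theorem tendsto_mollifier_rOut : Tendsto (fun n => (mollifier n).rOut) atTop (𝓝 0) := by
  simpa [mollifier] using
    (tendsto_one_div_add_atTop_nhds_zero_nat (𝕜 := ℝ)).const_mul 2

theorem Module.Dual.exists_injective_comp {K V ι : Type*} [Field K] [Infinite K]
    [AddCommGroup V] [Module K V] [Finite ι] {x : ι → V} (hx : Function.Injective x) :
    ∃ f : Module.Dual K V, Function.Injective (f ∘ x) := by
  let p : {q : ι × ι // q.1 ≠ q.2} → Subspace K (Module.Dual K V) := fun q =>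
    LinearMap.ker (Module.Dual.eval K V (x q.1.1 - x q.1.2))
  have hp : ∀ q, p q ≠ ⊤ := fun q hq => q.2 <| hx <| sub_eq_zero.mp <|
    (Module.forall_dual_apply_eq_zero_iff K _).mp (LinearMap.congr_fun (LinearMap.ker_eq_top.mp hq))
  obtain ⟨f, hf⟩ : ∃ f, f ∉ ⋃ q, (p q : Set (Module.Dual K V)) := by
    by_contra! h
    obtain ⟨q, hq⟩ := Subspace.exists_eq_top_of_iUnion_eq_univ (Set.eq_univ_of_forall h)
    exact hp q hq
  refine ⟨f, fun i j hij => by_contra fun hne => hf (Set.mem_iUnion.mpr ⟨⟨(i, j), hne⟩, ?_⟩)⟩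
  simpa [p, sub_eq_zero] using hij

theorem exists_sum_fin_smul_eq_of_span_range_eq_top {K V ι : Type*} [Field K] [AddCommGroup V]
    [Module K V] [FiniteDimensional K V] [Nonempty ι] {g : ι → V}
    (hg : Submodule.span K (Set.range g) = ⊤) {m : ℕ} (hm : finrank K V ≤ m) (y : V) :
    ∃ (a : Fin m → ι) (c : Fin m → K), ∑ j, c j • g (a j) = y := by
  classical
  let b := Basis.ofSpan hg.ge
  choose a ha using fun k => Basis.ofSpan_subset hg.ge ⟨k, rfl⟩
  let e := (Fintype.equivFin _).toEmbedding.trans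
    (Fin.castLEEmb ((finrank_eq_card_basis b).symm.trans_le hm))
  refine ⟨Function.extend e a fun _ => Classical.arbitrary ι, Function.extend e (b.repr y) 0, ?_⟩
  conv_rhs => rw [← b.sum_repr y]
  refine (Fintype.sum_of_injective e e.injective _ _ (fun j hj => ?_) fun k => ?_).symm
  · simp [Function.extend_apply' _ _ _ hj]
  · rw [e.injective.extend_apply, e.injective.extend_apply, ha]

def AnnihilatesNeurons {ι : Type*} [Fintype ι] (c t : ι → ℝ) (Ψ : ℝ → ℝ) : Prop :=
  ∀ w b : ℝ, ∑ i, c i * Ψ (w * t i - b) = 0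

namespace AnnihilatesNeurons

variable {ι : Type*} [Fintype ι] {c t : ι → ℝ} {Ψ : ℝ → ℝ}

theorem deriv_of_shift (hΨ : Differentiable ℝ Ψ) (h : AnnihilatesNeurons c t Ψ) :
    AnnihilatesNeurons c t (deriv Ψ) := by
  intro w b
  have hsum : HasDerivAt (fun b => ∑ i, c i * Ψ (w * t i - b))
      (∑ i, c i * -deriv Ψ (w * t i - b)) b :=
    HasDerivAt.fun_sum fun i _ => by
      simpa using ((hΨ _).hasDerivAt.comp b ((hasDerivAt_id b).const_sub _)).const_mul (c i)
  have hzero : HasDerivAt (fun b => ∑ i, c i * Ψ (w * t i - b)) 0 b := by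
    simpa only [h w] using hasDerivAt_const b (0 : ℝ)
  simpa [Finset.sum_neg_distrib] using hsum.unique hzero

theorem deriv_of_scale (hΨ : Differentiable ℝ Ψ) (h : AnnihilatesNeurons c t Ψ) :
    AnnihilatesNeurons (fun i => c i * t i) t (deriv Ψ) := by
  intro w b
  have hsum : HasDerivAt (fun w => ∑ i, c i * Ψ (w * t i - b))
      (∑ i, c i * t i * deriv Ψ (w * t i - b)) w :=
    HasDerivAt.fun_sum fun i _ => by
      have := ((hΨ _).hasDerivAt.comp w ((hasDerivAt_mul_const (t i)).sub_const b)).const_mul (c i)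
      simpa [Function.comp_def, mul_comm, mul_left_comm, mul_assoc] using this
  have hzero : HasDerivAt (fun w => ∑ i, c i * Ψ (w * t i - b)) 0 w := by
    simpa only [fun w => h w b] using hasDerivAt_const w (0 : ℝ)
  exact hsum.unique hzero

theorem iteratedDeriv {n k : ℕ} (hΨ : ContDiff ℝ n Ψ) (h : AnnihilatesNeurons c t Ψ)
    (hkn : k ≤ n) : AnnihilatesNeurons (fun i => c i * t i ^ k) t (iteratedDeriv n Ψ) := by
  induction n generalizing k with
  | zero => simpa [Nat.le_zero.mp hkn] using h
  | succ n ih =>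
    have hdiff : Differentiable ℝ (_root_.iteratedDeriv n Ψ) :=
      hΨ.differentiable_iteratedDeriv n (by exact_mod_cast n.lt_succ_self)
    rw [iteratedDeriv_succ]
    rcases hkn.lt_or_eq with hkn | rfl
    · exact (ih hΨ.of_succ (by omega)).deriv_of_shift hdiff
    · simpa [pow_succ, mul_assoc] using (ih hΨ.of_succ le_rfl).deriv_of_scale hdiff


theorem iteratedDeriv_pred_eq_zero {d : ℕ} {c t : Fin d → ℝ} (ht : Function.Injective t)
    (hc : c ≠ 0) (hΨ : ContDiff ℝ (d - 1 : ℕ) Ψ) (h : AnnihilatesNeurons c t Ψ) :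
    _root_.iteratedDeriv (d - 1) Ψ = 0 := by
  funext x
  by_contra hx
  refine hc (Matrix.eq_zero_of_forall_pow_sum_mul_pow_eq_zero ht fun k => ?_)
  have := h.iteratedDeriv hΨ (by omega : (k : ℕ) ≤ d - 1) 0 (-x)
  simp only [zero_mul, zero_sub, neg_neg, ← Finset.sum_mul] at this
  exact (mul_eq_zero.mp this).resolve_right hx

theorem convolution {σ φ : ℝ → ℝ} (hσ : LocallyIntegrable σ) (hφ : HasCompactSupport φ)
    (hφc : Continuous φ) (h : AnnihilatesNeurons c t σ) :
    AnnihilatesNeurons c t (φ ⋆[ContinuousLinearMap.lsmul ℝ ℝ] σ) := by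
  intro w b
  have hint : ∀ z, Integrable fun s => φ s * σ (z - s) := fun z => by
    simpa [ConvolutionExistsAt] using
      hφ.convolutionExists_left (ContinuousLinearMap.lsmul ℝ ℝ) hφc hσ z
  simp only [convolution_def, ContinuousLinearMap.lsmul_apply, smul_eq_mul,
    ← integral_const_mul]
  rw [← integral_finsetSum _ fun i _ => (hint _).const_mul (c i)]
  have hpt : ∀ s, ∑ i, c i * (φ s * σ (w * t i - b - s)) = φ s * 0 := fun s => by
    rw [← h w (b + s), Finset.mul_sum]
    exact Finset.sum_congr rfl fun i _ => by rw [sub_sub]; ring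
  simp [hpt]

end AnnihilatesNeurons

theorem AnnihilatesNeurons.exists_ae_eq_eval {d : ℕ} {c t : Fin d → ℝ} {σ : ℝ → ℝ}
    (hσ : LocallyIntegrable σ) (ht : Function.Injective t) (hc : c ≠ 0)
    (h : AnnihilatesNeurons c t σ) :
    ∃ P : ℝ[X], P.degree < (d - 1 : ℕ) ∧ ∀ᵐ x, σ x = P.eval x := by
  set ψ : ℕ → ℝ → ℝ := fun n => (mollifier n).normed volume ⋆[ContinuousLinearMap.lsmul ℝ ℝ] σ
  have hψ_poly : ∀ n, ∃ P : ℝ[X], P.degree < (d - 1 : ℕ) ∧ ∀ x, ψ n x = P.eval x := fun n => by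
    have hψ_smooth : ContDiff ℝ (d - 1 : ℕ) (ψ n) :=
      (mollifier n).hasCompactSupport_normed.contDiff_convolution_left _
        (mollifier n).contDiff_normed hσ
    have hψ_ann : AnnihilatesNeurons c t (ψ n) :=
      h.convolution hσ (mollifier n).hasCompactSupport_normed (mollifier n).continuous_normed
    exact exists_degree_lt_eq_eval_of_iteratedDeriv_eq_zero hψ_smooth
      (hψ_ann.iteratedDeriv_pred_eq_zero ht hc hψ_smooth)
  choose P hP_deg hP using hψ_poly
  have hψ_lim : ∀ᵐ x, Tendsto (fun n => ψ n x) atTop (𝓝 (σ x)) :=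
    ContDiffBump.ae_convolution_tendsto_right_of_locallyIntegrable (K := 2) tendsto_mollifier_rOut
      (Eventually.of_forall fun _ => le_rfl) hσ
  obtain ⟨Q, hQ_deg, hQ⟩ := exists_degree_lt_eq_eval_of_tendsto
    (infinite_setOf_of_ae hψ_lim) hP_deg (l := atTop) (f := σ) fun x hx => by
      simpa only [hP] using hx.out
  exact ⟨Q, hQ_deg, hψ_lim.mono hQ⟩

theorem span_range_neurons_eq_top {d : ℕ} {σ : ℝ → ℝ} (hσ : LocallyIntegrable σ)
    (hpoly : ¬ ∃ P : ℝ[X], P.natDegree ≤ d - 2 ∧ ∀ᵐ x, σ x = P.eval x)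
    {t : Fin d → ℝ} (ht : Function.Injective t) :
    Submodule.span ℝ (Set.range fun wb : ℝ × ℝ => fun i => σ (wb.1 * t i - wb.2)) = ⊤ := by
  by_contra hne
  obtain ⟨φ, hφ, hφ_span⟩ :=
    Submodule.exists_dual_map_eq_bot_of_lt_top (lt_top_iff_ne_top.mpr hne) inferInstance
  set c := (dotProductEquiv ℝ (Fin d)).symm φ
  have hc : c ≠ 0 := (LinearEquiv.map_ne_zero_iff _).mpr hφ
  have hann : AnnihilatesNeurons c t σ := fun w b => by
    have hker := Submodule.span_le.mp (LinearMap.le_ker_iff_map.mpr hφ_span) ⟨(w, b), rfl⟩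
    rwa [SetLike.mem_coe, LinearMap.mem_ker,
      ← (dotProductEquiv ℝ (Fin d)).apply_symm_apply φ] at hker
  obtain ⟨P, hP_deg, hP⟩ := hann.exists_ae_eq_eval hσ ht hc
  refine hpoly ⟨P, ?_, hP⟩
  rcases eq_or_ne P 0 with rfl | hP0
  · simp
  · have := (natDegree_lt_iff_degree_lt hP0).mpr hP_deg
    omega

theorem shallow_interpolation_general (d p : ℕ) (σ : ℝ → ℝ)
    (hσ : LocallyIntegrable σ)
    (hpoly : ¬ ∃ P : Polynomial ℝ, P.natDegree ≤ d - 2 ∧ ∀ᵐ t : ℝ, σ t = P.eval t)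
    (x : Fin d → Fin p → ℝ) (hx : Function.Injective x) (y : Fin d → ℝ)
    (h : ℕ) (hh : d ≤ h) :
    ∃ (W : Matrix (Fin h) (Fin p) ℝ) (v b : Fin h → ℝ) (b' : ℝ),
      ∀ i, (∑ j, v j * σ (W.mulVec (x i) j - b j)) - b' = y i := by
  obtain ⟨f, hf⟩ := Module.Dual.exists_injective_comp (K := ℝ) hx
  set a := (dotProductEquiv ℝ (Fin p)).symm f
  have ha : ∀ u, a ⬝ᵥ u = f u := fun u =>
    LinearMap.congr_fun ((dotProductEquiv ℝ (Fin p)).apply_symm_apply f) u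
  obtain ⟨wb, v, hv⟩ := exists_sum_fin_smul_eq_of_span_range_eq_top
    (span_range_neurons_eq_top hσ hpoly hf) (by simpa using hh) y
  refine ⟨Matrix.vecMulVec (fun j => (wb j).1) a, v, fun j => (wb j).2, 0, fun i => ?_⟩
  simpa [Matrix.vecMulVec_mulVec, ha, mul_comm] using congrFun hv i

/-- **Interpolation by shallow networks (Theorem 2.3).**
If `σ` is locally integrable and not a.e. equal to a polynomial of degree at most `d-2`,
then any data set of `d` points with distinct inputs can be interpolated by a shallow
neural network `f(x) = vᵀ σ(Wx − b) − b'` of any width `h ≥ d`. -/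
theorem shallow_interpolation (d p : ℕ) (hd : 2 ≤ d) (σ : ℝ → ℝ)
    (hσ : LocallyIntegrable σ)
    (hpoly : ¬ ∃ P : Polynomial ℝ, P.natDegree ≤ d - 2 ∧ ∀ᵐ t : ℝ, σ t = P.eval t)
    (x : Fin d → Fin p → ℝ) (hx : Function.Injective x) (y : Fin d → ℝ)
    (h : ℕ) (hh : d ≤ h) :
    ∃ (W : Matrix (Fin h) (Fin p) ℝ) (v b : Fin h → ℝ) (b' : ℝ),
      ∀ i, (∑ j, v j * σ (W.mulVec (x i) j - b j)) - b' = y i :=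
  shallow_interpolation_general d p σ hσ hpoly x hx y h hh
end

section
/- Let σ : ℝ → ℝ be locally integrable and let ζ ∈ C_0^∞(ℝ, [0,∞)) be a nonnegative smooth function with compact support and ∫_ℝ ζ(x) dx = 1. For ε > 0 define the mollification σ_ε(t) = ∫_ℝ (1/ε) ζ((t−x)/ε) σ(x) dx. If for every ε > 0 the function σ_ε is a polynomial of degree at most m, then σ is almost everywhere equal to a polynomial of degree at most m. -/
open MeasureTheory Filter Metric Topology

/-- **Mollification detects polynomials.**
Let `σ` be locally integrable and `ζ` a nonnegative smooth mollifier with compact support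
and total integral `1`. If for every `ε > 0` the mollification
`σ_ε(t) = ∫ (1/ε) ζ((t−x)/ε) σ(x) dx` is a polynomial of degree at most `m`, then `σ` is
almost everywhere equal to a polynomial of degree at most `m`. -/
theorem mollification_polynomial (σ : ℝ → ℝ) (hσ : LocallyIntegrable σ)
    (ζ : ℝ → ℝ) (hζsmooth : ContDiff ℝ (⊤ : ℕ∞) ζ) (hζsupp : HasCompactSupport ζ)
    (hζnonneg : ∀ t, 0 ≤ ζ t) (hζint : ∫ t, ζ t = 1) (m : ℕ)
    (hmoll : ∀ ε : ℝ, 0 < ε → ∃ P : Polynomial ℝ, P.natDegree ≤ m ∧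
      ∀ t : ℝ, (∫ u, ε⁻¹ * ζ ((t - u) / ε) * σ u) = P.eval t) :
    ∃ P : Polynomial ℝ, P.natDegree ≤ m ∧ ∀ᵐ t : ℝ, σ t = P.eval t := by
  classical
  -- a bound on ζ
  obtain ⟨C, hC⟩ := hζsupp.exists_bound_of_continuous hζsmooth.continuous
  -- a radius containing the support of ζ
  obtain ⟨R₀, hR₀⟩ := hζsupp.isCompact.isBounded.subset_closedBall 0
  set R : ℝ := max R₀ 1 with hRdef
  have hRpos : (0 : ℝ) < R := lt_of_lt_of_le one_pos (le_max_right _ _)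
  have hRsupp : tsupport ζ ⊆ closedBall 0 R :=
    hR₀.trans (closedBall_subset_closedBall (le_max_left _ _))
  -- the sequence of mollification parameters
  set ε : ℕ → ℝ := fun n => ((n : ℝ) + 1)⁻¹ with hεdef
  have hεpos : ∀ n, 0 < ε n := fun n => by positivity
  have hεlim : Tendsto ε atTop (𝓝[>] 0) := by
    refine tendsto_nhdsWithin_iff.2 ⟨?_, Eventually.of_forall fun n => hεpos n⟩
    simpa [hεdef, one_div] using tendsto_one_div_add_atTop_nhds_zero_nat (𝕜 := ℝ)
  set P : ℕ → Polynomial ℝ := fun n => (hmoll (ε n) (hεpos n)).choose with hPdef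
  have hPdeg : ∀ n, (P n).natDegree ≤ m := fun n => (hmoll (ε n) (hεpos n)).choose_spec.1
  have hPeval : ∀ n t, (∫ u, (ε n)⁻¹ * ζ ((t - u) / ε n) * σ u) = (P n).eval t :=
    fun n => (hmoll (ε n) (hεpos n)).choose_spec.2
  -- a.e. convergence of the mollifications to σ
  have main : ∀ᵐ t : ℝ, Tendsto (fun n => (P n).eval t) atTop (𝓝 (σ t)) := by
    filter_upwards [IsUnifLocDoublingMeasure.ae_tendsto_average_norm_sub volume hσ 1] with t ht
    have hδ : Tendsto (fun n => R * ε n) atTop (𝓝[>] 0) := by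
      refine tendsto_nhdsWithin_iff.2 ⟨?_, .of_forall fun n => mul_pos hRpos (hεpos n)⟩
      have := ((tendsto_nhdsWithin_iff.1 hεlim).1).const_mul R
      simpa using this
    have havg : Tendsto (fun n => ⨍ y in closedBall t (R * ε n), ‖σ y - σ t‖) atTop (𝓝 0) :=
      ht (fun _ => t) (fun n => R * ε n) hδ
        (.of_forall fun n => mem_closedBall_self (by simpa using (mul_pos hRpos (hεpos n)).le))
    have key : Tendsto (fun n => ∫ u, ((ε n)⁻¹ * ζ ((t - u) / ε n)) • σ u) atTop
        (𝓝 (σ t)) := by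
      apply tendsto_integral_smul_of_tendsto_average_norm_sub (2 * R * C) havg
      · exact .of_forall fun n => hσ.integrableOn_isCompact (isCompact_closedBall _ _)
      · have hone : ∀ n, (∫ u, (ε n)⁻¹ * ζ ((t - u) / ε n)) = 1 := by
          intro n
          rw [integral_const_mul]
          have h1 : (∫ u : ℝ, ζ ((t - u) / ε n)) = ∫ u : ℝ, ζ (u / ε n) :=
            integral_sub_left_eq_self (fun u => ζ (u / ε n)) volume t
          rw [h1, Measure.integral_comp_div ζ (ε n), hζint, abs_of_pos (hεpos n)]
          simp [inv_mul_cancel₀ (ne_of_gt (hεpos n))]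
        simp only [hone]
        exact tendsto_const_nhds
      · refine .of_forall fun n u hu => ?_
        simp only [Function.mem_support] at hu
        have hζne : ζ ((t - u) / ε n) ≠ 0 := by
          intro h; exact hu (by simp [h])
        have h1 : (t - u) / ε n ∈ closedBall (0:ℝ) R := hRsupp (subset_tsupport _ hζne)
        rw [mem_closedBall_zero_iff, Real.norm_eq_abs, abs_div,
          abs_of_pos (hεpos n), div_le_iff₀ (hεpos n)] at h1
        rw [mem_closedBall, Real.dist_eq]
        calc |u - t| = |t - u| := abs_sub_comm _ _
          _ ≤ R * ε n := h1
      · refine .of_forall fun n u => ?_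
        have hvol : (volume (closedBall t (R * ε n))).toReal = 2 * (R * ε n) := by
          rw [Real.volume_closedBall, ENNReal.toReal_ofReal (by nlinarith [hRpos, hεpos n])]
        rw [measureReal_def, hvol]
        have h1 : |(ε n)⁻¹ * ζ ((t - u) / ε n)| = (ε n)⁻¹ * ζ ((t - u) / ε n) :=
          abs_of_nonneg (mul_nonneg (inv_pos.2 (hεpos n)).le (hζnonneg _))
        have h2 : ζ ((t - u) / ε n) ≤ C :=
          (le_abs_self _).trans (by simpa [Real.norm_eq_abs] using hC ((t - u) / ε n))
        have h3 : 2 * R * C / (2 * (R * ε n)) = (ε n)⁻¹ * C := by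
          field_simp
        rw [h1, h3]
        exact mul_le_mul_of_nonneg_left h2 (le_of_lt (inv_pos.2 (hεpos n)))
    have : (fun n => ∫ u, ((ε n)⁻¹ * ζ ((t - u) / ε n)) • σ u)
        = fun n => (P n).eval t := by
      funext n
      rw [← hPeval n t]
      simp [smul_eq_mul, mul_assoc]
    rwa [this] at key
  -- the limit polynomial via Lagrange interpolation
  set A : Set ℝ := {t | Tendsto (fun n => (P n).eval t) atTop (𝓝 (σ t))} with hA
  have hAnull : volume Aᶜ = 0 := by
    simpa [hA, ae_iff, Set.compl_setOf] using main
  have hAinf : A.Infinite := by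
    intro hfin
    have h1 : volume A = 0 := hfin.countable.measure_zero _
    have h2 : (volume : Measure ℝ) Set.univ ≤ volume A + volume Aᶜ := by
      rw [← Set.union_compl_self A]
      exact measure_union_le _ _
    rw [h1, hAnull, Real.volume_univ] at h2
    simp at h2
  obtain ⟨S, hSA, hScard⟩ := hAinf.exists_subset_card_eq (m + 1)
  have hinj : Set.InjOn (id : ℝ → ℝ) S := Function.injective_id.injOn
  set Q : Polynomial ℝ := Lagrange.interpolate S id (fun x => σ x) with hQ
  have hQdeg : Q.natDegree ≤ m := by
    have hd : Q.degree < (S.card : WithBot ℕ) := Lagrange.degree_interpolate_lt _ hinj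
    rw [hScard] at hd
    by_cases hq : Q = 0
    · simp [hq]
    · have := (Polynomial.natDegree_lt_iff_degree_lt hq).2 (by exact_mod_cast hd)
      omega
  have hQeval : ∀ t ∈ A, σ t = Q.eval t := by
    intro t htA
    have hPn : ∀ n, (P n).eval t
        = ∑ x ∈ S, (P n).eval x * (Lagrange.basis S id x).eval t := by
      intro n
      have hdeg : (P n).degree < (S.card : WithBot ℕ) := by
        rw [hScard]
        calc (P n).degree ≤ ((P n).natDegree : WithBot ℕ) := Polynomial.degree_le_natDegree
          _ ≤ (m : WithBot ℕ) := by exact_mod_cast hPdeg n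
          _ < ((m + 1 : ℕ) : WithBot ℕ) := by exact_mod_cast Nat.lt_succ_self m
      conv_lhs => rw [Lagrange.eq_interpolate hinj hdeg]
      rw [Lagrange.interpolate_apply, Polynomial.eval_finset_sum]
      simp
    have hlim2 : Tendsto (fun n => ∑ x ∈ S, (P n).eval x * (Lagrange.basis S id x).eval t)
        atTop (𝓝 (∑ x ∈ S, σ x * (Lagrange.basis S id x).eval t)) := by
      refine tendsto_finset_sum _ fun x hx => ?_
      have hxA : x ∈ A := hSA hx
      exact (hxA : Tendsto _ _ _).mul_const _
    have h1 : Tendsto (fun n => (P n).eval t) atTop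
        (𝓝 (∑ x ∈ S, σ x * (Lagrange.basis S id x).eval t)) := by
      have : (fun n => (P n).eval t)
          = fun n => ∑ x ∈ S, (P n).eval x * (Lagrange.basis S id x).eval t := funext hPn
      rw [this]; exact hlim2
    have heq := tendsto_nhds_unique htA h1
    rw [heq, hQ, Lagrange.interpolate_apply, Polynomial.eval_finset_sum]
    simp
  refine ⟨Q, hQdeg, ?_⟩
  filter_upwards [main] with t ht using hQeval t ht
end

section
/- Let σ : ℝ → ℝ be smooth and not a polynomial of degree at most d−2, and let t_1, …, t_d ∈ ℝ be pairwise distinct. If c_1, …, c_d ∈ ℝ satisfy Σ_{i=1}^d c_i σ(a t_i − b) = 0 for all a, b ∈ ℝ, then c_1 = ⋯ = c_d = 0. -/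
open Polynomial Finset

/-- A smooth function whose `n`-th iterated derivative vanishes identically is a polynomial
of degree `< n`. -/
lemma poly_of_iteratedDeriv_eq_zero :
    ∀ (n : ℕ) (f : ℝ → ℝ), ContDiff ℝ ((⊤ : ℕ∞) : WithTop ℕ∞) f → (∀ x, iteratedDeriv n f x = 0) →
      ∃ P : Polynomial ℝ, P.degree < n ∧ ∀ x, f x = P.eval x := by
  intro n
  induction n with
  | zero =>
    intro f _ h
    refine ⟨0, by simp [Nat.cast_zero], fun x => ?_⟩
    simpa using h x
  | succ n ih =>
    intro f hf h
    have hdf : ContDiff ℝ ((⊤ : ℕ∞) : WithTop ℕ∞) (deriv f) :=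
      (contDiff_infty_iff_deriv.mp hf).2
    have h' : ∀ x, iteratedDeriv n (deriv f) x = 0 := by
      intro x
      have := h x
      rwa [iteratedDeriv_succ'] at this
    obtain ⟨P, hPdeg, hP⟩ := ih (deriv f) hdf h'
    have hPsum : P = ∑ k ∈ range n, monomial k (P.coeff k) := by
      rcases eq_or_ne P 0 with rfl | hP0
      · simp
      · exact P.as_sum_range' n ((P.natDegree_lt_iff_degree_lt hP0).mpr hPdeg)
    set Q : Polynomial ℝ := ∑ k ∈ range n, monomial (k + 1) (P.coeff k / (k + 1)) with hQ
    have hQder : derivative Q = P := by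
      rw [hQ, map_sum]
      conv_rhs => rw [hPsum]
      refine Finset.sum_congr rfl fun k _ => ?_
      rw [Polynomial.derivative_monomial]
      simp only [Nat.add_sub_cancel]
      congr 1
      push_cast
      field_simp
    have hQdeg : Q.degree ≤ n := by
      refine (Polynomial.degree_sum_le _ _).trans ?_
      refine Finset.sup_le fun k hk => ?_
      refine (Polynomial.degree_monomial_le _ _).trans ?_
      exact_mod_cast Nat.succ_le_of_lt (Finset.mem_range.mp hk)
    have hgderiv : ∀ x, deriv (fun x => f x - Q.eval x) x = 0 := by
      intro x
      have h1 : HasDerivAt f (deriv f x) x :=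
        (hf.differentiable (by simp) x).hasDerivAt
      have h2 : HasDerivAt (fun x => Q.eval x) (P.eval x) x := by
        have := Q.hasDerivAt x
        rwa [hQder] at this
      have : deriv (fun x => f x - Q.eval x) x = deriv f x - P.eval x := (h1.sub h2).deriv
      rw [this, hP x, sub_self]
    have hgdiff : Differentiable ℝ (fun x => f x - Q.eval x) :=
      (hf.differentiable (by simp)).sub (Polynomial.differentiable _)
    have hconst : ∀ x, f x - Q.eval x = f 0 - Q.eval 0 := fun x =>
      is_const_of_deriv_eq_zero hgdiff hgderiv x 0
    refine ⟨Q + C (f 0 - Q.eval 0), ?_, fun x => ?_⟩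
    · refine (Polynomial.degree_add_le _ _).trans_lt (max_lt ?_ ?_)
      · refine hQdeg.trans_lt ?_
        exact_mod_cast (Nat.cast_lt (α := WithBot ℕ)).mpr n.lt_succ_self
      · refine Polynomial.degree_C_le.trans_lt ?_
        exact_mod_cast Nat.succ_pos n
    · have := hconst x
      simp only [Polynomial.eval_add, Polynomial.eval_C]
      linarith

/-- Iterated derivative of the map `a ↦ c * σ (a * t - b)` at `0`. -/
lemma iteratedDeriv_affine_comp (σ : ℝ → ℝ) (hσ : ContDiff ℝ (⊤ : ℕ∞) σ) (k : ℕ) (cc tt b : ℝ) :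
    iteratedDeriv k (fun a => cc * σ (a * tt - b)) 0
      = cc * (tt ^ k * iteratedDeriv k σ (-b)) := by
  set g : ℝ → ℝ := fun z => σ (z + (-b)) with hg
  have hgC : ContDiff ℝ k g := by
    exact (hσ.of_le (by exact_mod_cast le_top)).comp (contDiff_id.add contDiff_const)
  have h1 : (fun a => σ (a * tt - b)) = fun a => g (tt * a) := by
    funext a
    simp only [hg]
    ring_nf
  have h2 : iteratedDeriv k (fun a => g (tt * a)) = fun a => tt ^ k * iteratedDeriv k g (tt * a) :=
    iteratedDeriv_comp_const_mul hgC tt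
  have h3 : iteratedDeriv k g = fun z => iteratedDeriv k σ (z + (-b)) :=
    iteratedDeriv_comp_add_const k σ (-b)
  have h4 : iteratedDeriv k (fun a => cc * σ (a * tt - b)) 0
      = cc * iteratedDeriv k (fun a => σ (a * tt - b)) 0 := by
    have hC : ContDiff ℝ k (fun a => σ (a * tt - b)) := by
      apply (hσ.of_le (by exact_mod_cast le_top)).comp
      exact (contDiff_id.mul contDiff_const).sub contDiff_const
    have h5 : (fun a => cc * σ (a * tt - b)) = cc • fun a => σ (a * tt - b) := by
      funext a; simp [smul_eq_mul]
    rw [h5]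
    simp only [iteratedDeriv]
    rw [iteratedFDeriv_const_smul_apply hC.contDiffAt]
    simp
  rw [h4, h1, h2]
  rw [h3]
  norm_num

/-- **Linear independence for smooth activations.**
If `σ` is smooth and not a polynomial of degree at most `d−2`, and `t₁, …, t_d` are pairwise
distinct, then `∑ cᵢ σ(a tᵢ − b) = 0` for all `a, b ∈ ℝ` forces all `cᵢ = 0`. -/
theorem smooth_sigma_shifts_linearIndependent (d : ℕ) (hd : 2 ≤ d) (σ : ℝ → ℝ)
    (hσ : ContDiff ℝ (⊤ : ℕ∞) σ)
    (hpoly : ¬ ∃ P : Polynomial ℝ, P.natDegree ≤ d - 2 ∧ ∀ t : ℝ, σ t = P.eval t)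
    (t : Fin d → ℝ) (ht : Function.Injective t) (c : Fin d → ℝ)
    (hc : ∀ a b : ℝ, ∑ i, c i * σ (a * t i - b) = 0) :
    ∀ i, c i = 0 := by
  -- each iterated derivative of σ of order < d is somewhere nonzero
  have hder : ∀ k : ℕ, k < d → ∃ x, iteratedDeriv k σ x ≠ 0 := by
    intro k hk
    by_contra hcon
    push_neg at hcon
    obtain ⟨P, hPdeg, hP⟩ := poly_of_iteratedDeriv_eq_zero k σ (hσ.of_le (by simp)) hcon
    refine hpoly ⟨P, ?_, hP⟩
    rcases eq_or_ne P 0 with rfl | hP0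
    · simp
    · have : P.natDegree < k := (P.natDegree_lt_iff_degree_lt hP0).mpr hPdeg
      omega
  -- iterated derivatives of the sum vanish
  have hsum : ∀ (k : ℕ) (b : ℝ),
      (∑ i, c i * (t i ^ k * iteratedDeriv k σ (-b))) = 0 := by
    intro k b
    have hzero : (fun a => ∑ i, c i * σ (a * t i - b)) = (0 : ℝ → ℝ) :=
      funext fun a => hc a b
    have hterm : ∀ i : Fin d, ContDiff ℝ k (fun a => c i * σ (a * t i - b)) := by
      intro i
      apply ContDiff.mul contDiff_const
      exact (hσ.of_le (by exact_mod_cast le_top)).comp ((contDiff_id.mul contDiff_const).sub contDiff_const)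
    have hs : iteratedDeriv k (fun a => ∑ i, c i * σ (a * t i - b)) 0
        = ∑ i, iteratedDeriv k (fun a => c i * σ (a * t i - b)) 0 := by
      simp only [iteratedDeriv]
      rw [iteratedFDeriv_sum (fun i _ => hterm i)]
      simp
    have hz : iteratedDeriv k (fun a => ∑ i, c i * σ (a * t i - b)) 0 = 0 := by
      rw [hzero]
      show iteratedDeriv k (fun _ : ℝ => (0:ℝ)) 0 = 0
      simp [iteratedDeriv, iteratedFDeriv_zero_fun]
    rw [hs] at hz
    rw [← hz]
    refine (Finset.sum_congr rfl fun i _ => ?_).symm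
    exact iteratedDeriv_affine_comp σ hσ k (c i) (t i) b
  -- moments vanish
  have hmom : ∀ k : ℕ, k < d → (∑ i, c i * t i ^ k) = 0 := by
    intro k hk
    obtain ⟨x, hx⟩ := hder k hk
    have := hsum k (-x)
    simp only [neg_neg] at this
    have factored : (∑ i, c i * t i ^ k) * iteratedDeriv k σ x = 0 := by
      rw [Finset.sum_mul]
      rw [← this]
      exact Finset.sum_congr rfl fun i _ => by ring
    exact (mul_eq_zero.mp factored).resolve_right hx
  -- Vandermonde
  have hdet : (Matrix.vandermonde t).det ≠ 0 :=
    Matrix.det_vandermonde_ne_zero_iff.mpr ht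
  have hvec : Matrix.vecMul c (Matrix.vandermonde t) = 0 := by
    funext k
    simp only [Matrix.vecMul, dotProduct, Matrix.vandermonde_apply, Pi.zero_apply]
    exact hmom k k.isLt
  have := Matrix.eq_zero_of_vecMul_eq_zero hdet hvec
  intro i
  exact congrFun this i
end

section
/- Let σ : ℝ → ℝ be a polynomial of degree m ≥ 1 and let (x_i, y_i), i = 1,…,d, be a data set with x_i ∈ ℝ^p pairwise distinct and y_i ∈ ℝ. Assume d ≤ Σ_{k=1}^{m} C(p+k−1, k) and that the d tuples (1, x_i, x_i^{⊗2}, …, x_i^{⊗m}), i = 1,…,d, are linearly independent in ℝ ⊕ ℝ^p ⊕ (ℝ^p)^{⊗2} ⊕ ⋯ ⊕ (ℝ^p)^{⊗m}. Then there exist W ∈ ℝ^{d×p}, v, b ∈ ℝ^d such that the shallow network f(x) = v^T σ(Wx − b) satisfies f(x_i) = y_i for all i = 1,…,d. -/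
/-!
If the vectors `φ(w, b) = (P(⟪w, xᵢ⟫ - b))ᵢ` span `ℝ^d`, then `d` of them form a basis; they give
the rows of `W` and the entries of `b`, and `v` is the coordinate vector of `y` in that basis.
To see that they span, let `c` be orthogonal to every `φ(w, b)`. The Taylor coefficients of the
translates of `P` are the Hasse derivatives of `P`, which have every degree `≤ m`, so
`∑ cᵢ ⟪w, xᵢ⟫^k = 0` for all `w` and `k ≤ m`. Differentiating in `w` (polarization) turns this
into `∑ cᵢ xᵢ^⊗k = 0` coordinatewise, and linear independence forces `c = 0`.
-/

open Polynomial Finset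

theorem sum_smul_tprod_eq_zero_of_forall_sum_mul_prod_eq_zero {R ι κ : Type*} [CommRing R]
    [Fintype ι] [Finite κ] {n : ℕ} {c : ι → R} {x : ι → κ → R}
    (h : ∀ f : Fin n → κ, ∑ i, c i * ∏ j, x i (f j) = 0) :
    ∑ i, c i • (PiTensorProduct.tprod R (fun _ : Fin n => x i) : TensorPower R n (κ → R)) =
      0 := by
  refine (Basis.piTensorProduct fun _ : Fin n => Pi.basisFun R κ).repr.injective ?_
  ext f
  simpa using h f

section CharZero

variable {K ι : Type*} [Field K] [CharZero K] [Fintype ι]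

theorem Polynomial.pow_mem_span_hasseDeriv {P : K[X]} (hP : P ≠ 0) {r : ℕ}
    (hr : r ≤ P.natDegree) : X ^ r ∈ Submodule.span K (Set.range fun k => hasseDeriv k P) := by
  induction r using Nat.strong_induction_on with
  | _ r ih =>
    have hH : (hasseDeriv (P.natDegree - r) P).natDegree < r + 1 := by
      have := natDegree_hasseDeriv_le P (P.natDegree - r)
      omega
    have hlead : (hasseDeriv (P.natDegree - r) P).coeff r ≠ 0 := by
      rw [hasseDeriv_coeff, Nat.add_sub_cancel' hr]
      exact mul_ne_zero (Nat.cast_ne_zero.mpr (Nat.choose_pos (by omega)).ne')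
        (leadingCoeff_ne_zero.mpr hP)
    set H := hasseDeriv (P.natDegree - r) P
    have hsplit : H = ∑ n ∈ range r, C (H.coeff n) * X ^ n + H.coeff r • X ^ r := by
      nth_rewrite 1 [as_sum_range_C_mul_X_pow' H hH]
      rw [sum_range_succ, C_mul']
    have hmem : H.coeff r • X ^ r ∈ Submodule.span K (Set.range fun k => hasseDeriv k P) := by
      rw [eq_sub_of_add_eq' hsplit.symm]
      refine sub_mem (Submodule.subset_span ⟨_, rfl⟩) (sum_mem fun n hn => ?_)
      rw [C_mul']
      exact Submodule.smul_mem _ _ (ih n (mem_range.mp hn) ((mem_range.mp hn).trans_le hr).le)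
    simpa [smul_smul, hlead] using Submodule.smul_mem _ (H.coeff r)⁻¹ hmem

theorem Polynomial.sum_mul_eval_hasseDeriv_eq_zero {P : K[X]} {c t : ι → K}
    (h : ∀ b, ∑ i, c i * P.eval (t i - b) = 0) (k : ℕ) :
    ∑ i, c i * (hasseDeriv k P).eval (t i) = 0 := by
  have htaylor : ∑ i, c i • taylor (t i) P = 0 := by
    refine Polynomial.funext fun s => ?_
    simpa [eval_finsetSum, taylor_eval, add_comm s, sub_neg_eq_add] using h (-s)
  simpa [finsetSum_coeff, taylor_coeff] using congrArg (coeff · k) htaylor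

theorem sum_mul_pow_eq_zero_of_forall_sum_mul_eval_sub_eq_zero {P : K[X]} (hP : P ≠ 0)
    {c t : ι → K} (h : ∀ b, ∑ i, c i * P.eval (t i - b) = 0) {r : ℕ} (hr : r ≤ P.natDegree) :
    ∑ i, c i * t i ^ r = 0 := by
  let ℓ : K[X] →ₗ[K] K := ∑ i, c i • leval (t i)
  have hℓ : Submodule.span K (Set.range fun k => hasseDeriv k P) ≤ LinearMap.ker ℓ :=
    Submodule.span_le.mpr <| Set.range_subset_iff.mpr fun k => by
      simpa [ℓ] using sum_mul_eval_hasseDeriv_eq_zero h k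
  simpa [ℓ] using hℓ (pow_mem_span_hasseDeriv hP hr)

theorem sum_mul_mul_pow_eq_zero_of_forall_sum_mul_add_mul_pow_eq_zero {A a b : ι → K} {q : ℕ}
    (h : ∀ s, ∑ i, A i * (a i + s * b i) ^ (q + 1) = 0) :
    ∑ i, A i * b i * a i ^ q = 0 := by
  have hQ : ∑ i, C (A i) * (C (a i) + X * C (b i)) ^ (q + 1) = 0 :=
    Polynomial.funext fun s => by
      simpa only [eval_finsetSum, eval_mul, eval_pow, eval_add, eval_C, eval_X, eval_zero]
        using h s
  have hderiv := congrArg (fun Q => (derivative Q).eval 0) hQ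
  simp only [derivative_sum, derivative_mul, derivative_C, derivative_pow, derivative_add,
    derivative_X, eval_finsetSum, eval_add, eval_mul, eval_pow, eval_C, eval_X] at hderiv
  refine (mul_eq_zero.mp ?_).resolve_left (Nat.cast_add_one_ne_zero (R := K) q)
  rw [mul_sum]
  simpa [mul_comm, mul_left_comm, mul_assoc] using hderiv

section Polarization

variable {V : Type*} [AddCommGroup V] [Module K V] {c : ι → K} {ℓ : ι → V →ₗ[K] K}

theorem sum_mul_prod_mul_pow_eq_zero_of_forall_sum_mul_pow_eq_zero {n q : ℕ}
    (h : ∀ w, ∑ i, c i * ℓ i w ^ (n + q) = 0) (u : Fin n → V) (w : V) :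
    ∑ i, c i * (∏ j, ℓ i (u j)) * ℓ i w ^ q = 0 := by
  induction n generalizing q w with
  | zero => simpa using h w
  | succ n ih =>
    have hs (s : K) :
        ∑ i, (c i * ∏ j : Fin n, ℓ i (u j.succ)) * (ℓ i w + s * ℓ i (u 0)) ^ (q + 1) = 0 := by
      simpa using ih (q := q + 1) (by simpa only [← Nat.add_assoc, Nat.add_right_comm] using h)
        (fun j => u j.succ) (w + s • u 0)
    simpa [Fin.prod_univ_succ, mul_comm, mul_left_comm, mul_assoc] using
      sum_mul_mul_pow_eq_zero_of_forall_sum_mul_add_mul_pow_eq_zero hs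

theorem sum_mul_prod_eq_zero_of_forall_sum_mul_pow_eq_zero {n : ℕ}
    (h : ∀ w, ∑ i, c i * ℓ i w ^ n = 0) (u : Fin n → V) : ∑ i, c i * ∏ j, ℓ i (u j) = 0 := by
  simpa using sum_mul_prod_mul_pow_eq_zero_of_forall_sum_mul_pow_eq_zero (q := 0) h u 0

end Polarization

theorem eq_zero_of_forall_sum_mul_eval_dotProduct_sub_eq_zero {P : K[X]} (hP : P ≠ 0) {p : ℕ}
    {x : ι → Fin p → K}
    (hli : LinearIndependent K fun i (k : Fin (P.natDegree + 1)) =>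
      (PiTensorProduct.tprod K (fun _ : Fin k => x i) : TensorPower K k (Fin p → K)))
    {c : ι → K} (h : ∀ w b, ∑ i, c i * P.eval (w ⬝ᵥ x i - b) = 0) : c = 0 := by
  have hpow (k : Fin (P.natDegree + 1)) (w : Fin p → K) :
      ∑ i, c i * (x i ⬝ᵥ w) ^ (k : ℕ) = 0 := by
    simpa only [dotProduct_comm] using
      sum_mul_pow_eq_zero_of_forall_sum_mul_eval_sub_eq_zero hP (h w) (Nat.lt_succ_iff.mp k.2)
  have htensor (k : Fin (P.natDegree + 1)) :
      ∑ i, c i • (PiTensorProduct.tprod K (fun _ : Fin k => x i) : TensorPower K k (Fin p → K))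
        = 0 := by
    classical
    refine sum_smul_tprod_eq_zero_of_forall_sum_mul_prod_eq_zero fun f => ?_
    simpa using sum_mul_prod_eq_zero_of_forall_sum_mul_pow_eq_zero
      (ℓ := fun i => dotProductEquiv K (Fin p) (x i)) (by simpa using hpow k)
      fun j => Pi.single (f j) 1
  exact funext <| Fintype.linearIndependent_iff.mp hli c <| funext fun k => by
    simpa only [Finset.sum_apply, Pi.smul_apply, Pi.zero_apply] using htensor k

end CharZero

theorem span_range_eq_top_of_forall_dotProduct_eq_zero {K ι α : Type*} [Field K] [Fintype ι]
    {φ : α → ι → K} (h : ∀ c : ι → K, (∀ a, c ⬝ᵥ φ a = 0) → c = 0) :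
    Submodule.span K (Set.range φ) = ⊤ := by
  classical
  rw [← Submodule.dualAnnihilator_eq_bot_iff, Submodule.eq_bot_iff]
  intro f hf
  obtain ⟨c, rfl⟩ := (dotProductEquiv K ι).surjective f
  rw [h c fun a => (Submodule.mem_dualAnnihilator _).mp hf _ (Submodule.subset_span ⟨a, rfl⟩),
    map_zero]

theorem Module.Basis.exists_sum_smul_eq_of_span_range_eq_top {K V ι α : Type*} [DivisionRing K]
    [AddCommGroup V] [Module K V] [Fintype ι] (b : Basis ι K V) {φ : α → V}
    (hφ : Submodule.span K (Set.range φ) = ⊤) (y : V) :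
    ∃ (a : ι → α) (v : ι → K), ∑ j, v j • φ (a j) = y := by
  let b' := (Basis.ofSpan hφ.ge).reindex ((Basis.ofSpan hφ.ge).indexEquiv b)
  have hb' (j : ι) : b' j ∈ Set.range φ := by
    simpa [b'] using Basis.ofSpan_subset hφ.ge (Set.mem_range_self _)
  choose a ha using hb'
  exact ⟨a, b'.repr y, by simpa only [ha] using b'.sum_repr y⟩

theorem polynomial_activation_interpolation_general (d p : ℕ) (P : Polynomial ℝ)
    (hm : 1 ≤ P.natDegree) (x : Fin d → Fin p → ℝ)
    (y : Fin d → ℝ)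
    (hli : LinearIndependent ℝ
      (fun i : Fin d => fun k : Fin (P.natDegree + 1) =>
        (PiTensorProduct.tprod ℝ (fun _ : Fin (k : ℕ) => x i) :
          TensorPower ℝ (k : ℕ) (Fin p → ℝ)))) :
    ∃ (W : Matrix (Fin d) (Fin p) ℝ) (v b : Fin d → ℝ),
      ∀ i, ∑ j, v j * P.eval (W.mulVec (x i) j - b j) = y i := by
  have hP : P ≠ 0 := by
    rintro rfl
    simp at hm
  let φ : (Fin p → ℝ) × ℝ → Fin d → ℝ := fun wb i => P.eval (wb.1 ⬝ᵥ x i - wb.2)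
  have hspan : Submodule.span ℝ (Set.range φ) = ⊤ :=
    span_range_eq_top_of_forall_dotProduct_eq_zero fun c hc =>
      eq_zero_of_forall_sum_mul_eval_dotProduct_sub_eq_zero hP hli fun w b => hc (w, b)
  obtain ⟨a, v, hv⟩ := (Pi.basisFun ℝ (Fin d)).exists_sum_smul_eq_of_span_range_eq_top hspan y
  refine ⟨Matrix.of fun j => (a j).1, v, fun j => (a j).2, fun i => ?_⟩
  simpa [φ, Matrix.mulVec] using congrFun hv i

/-- **Interpolation for polynomial activations (Proposition 3.1, part 2).**
Let `σ` be a polynomial of degree `m ≥ 1` and `(xᵢ, yᵢ)` a data set with `xᵢ ∈ ℝ^p` pairwise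
distinct. If `d ≤ ∑_{k=1}^{m} C(p+k−1, k)` and the tuples `(1, xᵢ, xᵢ^⊗2, …, xᵢ^⊗m)` are
linearly independent, then a shallow network `f(x) = vᵀ σ(Wx − b)` of width `d`
interpolates the data. -/
theorem polynomial_activation_interpolation (d p : ℕ) (P : Polynomial ℝ)
    (hm : 1 ≤ P.natDegree) (x : Fin d → Fin p → ℝ) (hx : Function.Injective x)
    (y : Fin d → ℝ)
    (hd : d ≤ ∑ k ∈ Finset.Icc 1 P.natDegree, (p + k - 1).choose k)
    (hli : LinearIndependent ℝ
      (fun i : Fin d => fun k : Fin (P.natDegree + 1) =>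
        (PiTensorProduct.tprod ℝ (fun _ : Fin (k : ℕ) => x i) :
          TensorPower ℝ (k : ℕ) (Fin p → ℝ)))) :
    ∃ (W : Matrix (Fin d) (Fin p) ℝ) (v b : Fin d → ℝ),
      ∀ i, ∑ j, v j * P.eval (W.mulVec (x i) j - b j) = y i :=
  polynomial_activation_interpolation_general d p P hm x y hli
end

section
/- Let x_1, …, x_d ∈ ℝ^p, let c_1, …, c_d ∈ ℝ and let k ≥ 0 be an integer. Then Σ_{i=1}^{d} c_i (w^T x_i)^k = 0 for all w ∈ ℝ^p if and only if Σ_{i=1}^{d} c_i x_i^{⊗k} = 0 in the k-fold tensor power (ℝ^p)^{⊗k}. -/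
/-!
Both sides are equivalent to the vanishing of the coordinates `∑ᵢ cᵢ ∏ₘ xᵢ(f m)`,
`f : Fin k → Fin p`, of `∑ᵢ cᵢ xᵢ^{⊗k}` in the standard basis. For the polynomial side, the
identity `∑ᵢ cᵢ (wᵀxᵢ)^k = 0` can be differentiated in `w_j`; this gives the same identity
of degree `k - 1` with weights `cᵢ xᵢⱼ`, and induction on `k` peels off one coordinate at a time.
-/

open Finset MvPolynomial

section TensorCoordinates

variable {R n ι κ : Type*} [CommSemiring R] [Fintype n] [Fintype ι] [Fintype κ]

theorem sum_smul_tprod_eq_zero_iff (x : ι → n → R) (c : ι → R) :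
    ∑ i, c i • PiTensorProduct.tprod R (fun _ : κ => x i) = 0 ↔
      ∀ f : κ → n, ∑ i, c i * ∏ m, x i (f m) = 0 := by
  rw [← (Basis.piTensorProduct fun _ : κ => Pi.basisFun R n).repr.map_eq_zero_iff,
    Finsupp.ext_iff]
  simp [Basis.piTensorProduct_repr_tprod_apply]

end TensorCoordinates

section LinearForms

variable {R n ι : Type*} [Fintype n] [Fintype ι]

theorem sum_mul_dotProduct_pow_eq [CommSemiring R] (x : ι → n → R) (c : ι → R) (k : ℕ)
    (w : n → R) :
    ∑ i, c i * (w ⬝ᵥ x i) ^ k =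
      ∑ f : Fin k → n, (∏ m, w (f m)) * ∑ i, c i * ∏ m, x i (f m) := by
  simp_rw [dotProduct, Fintype.sum_pow, mul_sum, prod_mul_distrib]
  rw [sum_comm]
  exact sum_congr rfl fun f _ => sum_congr rfl fun i _ => by ring

noncomputable def linearFormPoly [CommSemiring R] (v : n → R) : MvPolynomial n R :=
  ∑ j, X j * C (v j)

theorem eval_linearFormPoly [CommSemiring R] (w v : n → R) :
    eval w (linearFormPoly v) = w ⬝ᵥ v := by
  simp [linearFormPoly, dotProduct]

theorem pderiv_linearFormPoly [CommSemiring R] [DecidableEq n] (j : n) (v : n → R) :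
    pderiv j (linearFormPoly v) = C (v j) := by
  simp [linearFormPoly, pderiv_X, Pi.single_apply]

theorem pderiv_sum_C_mul_linearFormPoly_pow [CommSemiring R] [DecidableEq n]
    (x : ι → n → R) (c : ι → R) (k : ℕ) (j : n) :
    pderiv j (∑ i, C (c i) * linearFormPoly (x i) ^ (k + 1)) =
      (k + 1 : MvPolynomial n R) * ∑ i, C (c i * x i j) * linearFormPoly (x i) ^ k := by
  simp only [map_sum, Derivation.leibniz, Derivation.leibniz_pow, pderiv_C, pderiv_linearFormPoly,
    mul_sum, smul_eq_mul, nsmul_eq_mul, add_tsub_cancel_right, map_mul]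
  push_cast
  exact sum_congr rfl fun i _ => by ring

variable [CommRing R] [IsDomain R] [CharZero R]

theorem sum_mul_prod_eq_zero_of_sum_C_mul_linearFormPoly_pow_eq_zero (x : ι → n → R)
    (k : ℕ) (c : ι → R) (h : ∑ i, C (c i) * linearFormPoly (x i) ^ k = 0) (f : Fin k → n) :
    ∑ i, c i * ∏ m, x i (f m) = 0 := by
  classical
  induction k generalizing c with
  | zero => simpa [← map_sum] using h
  | succ k ih =>
    have hderiv := congrArg (pderiv (f 0)) h
    rw [pderiv_sum_C_mul_linearFormPoly_pow, map_zero] at hderiv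
    simpa [Fin.prod_univ_succ, mul_assoc, Fin.tail] using
      ih _ ((mul_eq_zero.1 hderiv).resolve_left (Nat.cast_add_one_ne_zero k)) (Fin.tail f)

theorem forall_sum_mul_dotProduct_pow_eq_zero_iff (x : ι → n → R) (c : ι → R) (k : ℕ) :
    (∀ w : n → R, ∑ i, c i * (w ⬝ᵥ x i) ^ k = 0) ↔
      ∀ f : Fin k → n, ∑ i, c i * ∏ m, x i (f m) = 0 := by
  refine ⟨fun h => sum_mul_prod_eq_zero_of_sum_C_mul_linearFormPoly_pow_eq_zero x k c ?_,
    fun h w => by simp [sum_mul_dotProduct_pow_eq, h]⟩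
  exact MvPolynomial.funext fun w => by simpa [eval_linearFormPoly] using h w

end LinearForms

/-- **Powers of linear forms and tensor powers.**
For `x₁, …, x_d ∈ ℝ^p`, `c ∈ ℝ^d` and `k ≥ 0`:
`∑ᵢ cᵢ (wᵀxᵢ)^k = 0` for all `w ∈ ℝ^p` iff `∑ᵢ cᵢ xᵢ^{⊗k} = 0` in `(ℝ^p)^{⊗k}`. -/
theorem powers_vanish_iff_tensorPower_vanish (d p k : ℕ) (x : Fin d → Fin p → ℝ)
    (c : Fin d → ℝ) :
    (∀ w : Fin p → ℝ, ∑ i, c i * (∑ j, w j * x i j) ^ k = 0) ↔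
      ∑ i, c i • (PiTensorProduct.tprod ℝ (fun _ : Fin k => x i) :
        TensorPower ℝ k (Fin p → ℝ)) = 0 := by
  rw [sum_smul_tprod_eq_zero_iff]
  exact forall_sum_mul_dotProduct_pow_eq_zero_iff x c k
end

section
/- Let σ : ℝ → ℝ be a polynomial of degree m > 1 and p ≥ 1. Then for every continuous function f : ℝ^p → ℝ, every compact set K ⊆ ℝ^p and every ε > 0, there exists a feedforward neural network g with activation σ (of some depth l, with all weight matrices and biases real) such that sup_{x ∈ K} |f(x) − g(x)| < ε. In particular, every monomial x_1^{i_1} x_2^{i_2} ⋯ x_p^{i_p} lies in the closure of the set of such networks in the topology of uniform convergence on compact sets. -/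
section PolyPart
open Polynomial

noncomputable def transSpan (P : ℝ[X]) : Submodule ℝ ℝ[X] :=
  Submodule.span ℝ (Set.range fun c : ℝ => taylor c P)

lemma taylor_mem_transSpan (P : ℝ[X]) (c : ℝ) : taylor c P ∈ transSpan P :=
  Submodule.subset_span ⟨c, rfl⟩

lemma taylor_eq_sum_hasse (P : ℝ[X]) (c : ℝ) :
    taylor c P = ∑ k ∈ Finset.range (P.natDegree + 1), c ^ k • hasseDeriv k P := by
  ext n
  rw [taylor_coeff, eval_eq_sum_range'
    (lt_of_le_of_lt (natDegree_hasseDeriv_le P n) (Nat.lt_succ_of_le (Nat.sub_le _ _))) c,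
    finset_sum_coeff]
  refine Finset.sum_congr rfl fun k _ => ?_
  rw [coeff_smul, hasseDeriv_coeff, hasseDeriv_coeff, smul_eq_mul]
  rw [add_comm k n, Nat.choose_symm_add]
  ring

lemma mem_of_vandermonde {M : Type*} [AddCommGroup M] [Module ℝ M] (V : Submodule ℝ M)
    (n : ℕ) (v : Fin n → M) (h : ∀ c : ℝ, ∑ k : Fin n, c ^ (k : ℕ) • v k ∈ V) :
    ∀ k, v k ∈ V := by
  intro k
  set A : Matrix (Fin n) (Fin n) ℝ := Matrix.vandermonde (fun i => (i : ℝ)) with hA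
  have hdet : IsUnit A.det := by
    rw [isUnit_iff_ne_zero, hA, Matrix.det_vandermonde_ne_zero_iff]
    intro i j hij
    exact Fin.ext (Nat.cast_injective hij)
  have hid : ∀ k, v k = ∑ j, (A⁻¹ * A) k j • v j := by
    intro k
    rw [Matrix.nonsing_inv_mul A hdet]
    simp [Matrix.one_apply, ite_smul]
  rw [hid k]
  have : ∑ j, (A⁻¹ * A) k j • v j = ∑ i, (A⁻¹ k i) • ∑ j, A i j • v j := by
    simp only [Matrix.mul_apply, Finset.sum_smul, Finset.smul_sum, smul_smul]
    rw [Finset.sum_comm]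
  rw [this]
  refine Submodule.sum_mem V fun i _ => Submodule.smul_mem V _ ?_
  have : ∑ j, A i j • v j = ∑ j : Fin n, ((i : ℝ)) ^ (j : ℕ) • v j := by
    refine Finset.sum_congr rfl fun j _ => ?_
    simp [hA, Matrix.vandermonde]
  rw [this]
  exact h _

lemma hasse_mem_transSpan (P : ℝ[X]) (k : ℕ) (hk : k ≤ P.natDegree) :
    hasseDeriv k P ∈ transSpan P := by
  have h := mem_of_vandermonde (transSpan P) (P.natDegree + 1)
    (fun j => hasseDeriv (j : ℕ) P) ?_ ⟨k, Nat.lt_succ_of_le hk⟩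
  · exact h
  · intro c
    have : ∑ j : Fin (P.natDegree + 1), c ^ (j : ℕ) • hasseDeriv (j : ℕ) P
        = taylor c P := by
      rw [taylor_eq_sum_hasse, Fin.sum_univ_eq_sum_range (fun j => c ^ j • hasseDeriv j P)]
    rw [this]
    exact taylor_mem_transSpan P c

lemma eq_quad_of_natDegree_le_two (Q : ℝ[X]) (h : Q.natDegree ≤ 2) :
    Q = C (Q.coeff 0) + C (Q.coeff 1) * X + C (Q.coeff 2) * X ^ 2 := by
  ext n
  match n with
  | 0 => simp
  | 1 => simp [coeff_X_pow]
  | 2 => simp [coeff_X_pow, coeff_X]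
  | (n+3) =>
    rw [coeff_eq_zero_of_natDegree_lt (lt_of_le_of_lt h (by omega))]
    simp [coeff_X, coeff_X_pow, coeff_C]

lemma exists_rep (P : ℝ[X]) (Q : ℝ[X]) (hQ : Q ∈ transSpan P) :
    ∃ (n : ℕ) (d κ : Fin n → ℝ), ∀ t : ℝ, ∑ i, d i * P.eval (t + κ i) = Q.eval t := by
  rw [transSpan, Submodule.mem_span_set'] at hQ
  obtain ⟨n, f, g, hfg⟩ := hQ
  choose κ hκ using fun i => (g i).2
  refine ⟨n, f, κ, fun t => ?_⟩
  have := congrArg (Polynomial.eval t) hfg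
  rw [← this]
  rw [eval_finset_sum]
  refine Finset.sum_congr rfl fun i _ => ?_
  rw [← hκ i, eval_smul, taylor_eval, smul_eq_mul]

lemma key_reps (P : ℝ[X]) (hm : 1 < P.natDegree) :
    (∃ (n : ℕ) (d κ : Fin n → ℝ), ∀ t : ℝ, ∑ i, d i * P.eval (t + κ i) = t) ∧
    (∃ (n : ℕ) (d κ : Fin n → ℝ), ∀ t : ℝ, ∑ i, d i * P.eval (t + κ i) = t ^ 2) := by
  set m := P.natDegree with hmdef
  have hP0 : P ≠ 0 := fun h => by simp [h, hmdef] at hm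
  have ha : P.coeff m ≠ 0 := by
    rw [hmdef, coeff_natDegree]; exact leadingCoeff_ne_zero.mpr hP0
  -- the three Hasse derivatives
  have hmem0 : hasseDeriv m P ∈ transSpan P := hasse_mem_transSpan P m le_rfl
  have hmem1 : hasseDeriv (m-1) P ∈ transSpan P := hasse_mem_transSpan P _ (Nat.sub_le _ _)
  have hmem2 : hasseDeriv (m-2) P ∈ transSpan P := hasse_mem_transSpan P _ (Nat.sub_le _ _)
  have hcoeff : ∀ k n : ℕ, (hasseDeriv k P).coeff n = (n + k).choose k * P.coeff (n + k) :=
    fun k n => hasseDeriv_coeff k P n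
  have hhigh : ∀ j : ℕ, m < j → P.coeff j = 0 := fun j hj =>
    coeff_eq_zero_of_natDegree_lt hj
  -- Q0 = hasseDeriv m P is the constant C a
  have hdeg0 : (hasseDeriv m P).natDegree ≤ 2 :=
    le_trans (natDegree_hasseDeriv_le P m) (by omega)
  have hQ0 : hasseDeriv m P = C ((hasseDeriv m P).coeff 0) := by
    have e := eq_quad_of_natDegree_le_two _ hdeg0
    rw [hcoeff m 1, hcoeff m 2, hhigh (1+m) (by omega), hhigh (2+m) (by omega)] at e
    simpa using e
  have hc00 : (hasseDeriv m P).coeff 0 = P.coeff m := by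
    rw [hcoeff]; simp
  -- 1 ∈ V
  have hone : (1 : ℝ[X]) ∈ transSpan P := by
    have : (1 : ℝ[X]) = (P.coeff m)⁻¹ • hasseDeriv m P := by
      rw [hQ0, hc00, smul_C, smul_eq_mul, inv_mul_cancel₀ ha, C_1]
    rw [this]
    exact Submodule.smul_mem _ _ hmem0
  -- Q1 = hasseDeriv (m-1) P = C c0 + C c1 * X with c1 ≠ 0
  have hdeg1 : (hasseDeriv (m-1) P).natDegree ≤ 2 :=
    le_trans (natDegree_hasseDeriv_le P (m-1)) (by omega)
  have e1 := eq_quad_of_natDegree_le_two _ hdeg1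
  have hc12 : (hasseDeriv (m-1) P).coeff 2 = 0 := by
    rw [hcoeff, hhigh (2 + (m-1)) (by omega), mul_zero]
  have hc11 : (hasseDeriv (m-1) P).coeff 1 = (m.choose (m-1) : ℝ) * P.coeff m := by
    rw [hcoeff, show (1:ℕ) + (m-1) = m from by omega]
  have hc11ne : (hasseDeriv (m-1) P).coeff 1 ≠ 0 := by
    rw [hc11]
    exact mul_ne_zero (Nat.cast_ne_zero.mpr (Nat.choose_pos (Nat.sub_le _ _)).ne') ha
  rw [hc12] at e1
  set c1 := (hasseDeriv (m-1) P).coeff 1 with hc1def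
  set c0 := (hasseDeriv (m-1) P).coeff 0 with hc0def
  have hX : (X : ℝ[X]) ∈ transSpan P := by
    have : (X : ℝ[X]) = c1⁻¹ • (hasseDeriv (m-1) P) - (c1⁻¹ * c0) • (1 : ℝ[X]) := by
      rw [e1]
      simp only [smul_eq_C_mul, map_mul, C_0, zero_mul, add_zero]
      rw [mul_add, ← mul_assoc, ← C_mul, ← C_mul, inv_mul_cancel₀ hc11ne, C_1]
      ring
    rw [this]
    exact Submodule.sub_mem _ (Submodule.smul_mem _ _ hmem1) (Submodule.smul_mem _ _ hone)
  -- Q2 = hasseDeriv (m-2) P with coeff 2 ≠ 0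
  have hdeg2 : (hasseDeriv (m-2) P).natDegree ≤ 2 :=
    le_trans (natDegree_hasseDeriv_le P (m-2)) (by omega)
  have e2 := eq_quad_of_natDegree_le_two _ hdeg2
  have hc22 : (hasseDeriv (m-2) P).coeff 2 = (m.choose (m-2) : ℝ) * P.coeff m := by
    rw [hcoeff, show (2:ℕ) + (m-2) = m from by omega]
  have hc22ne : (hasseDeriv (m-2) P).coeff 2 ≠ 0 := by
    rw [hc22]
    exact mul_ne_zero (Nat.cast_ne_zero.mpr (Nat.choose_pos (Nat.sub_le _ _)).ne') ha
  set d2 := (hasseDeriv (m-2) P).coeff 2 with hd2def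
  set d1 := (hasseDeriv (m-2) P).coeff 1 with hd1def
  set d0 := (hasseDeriv (m-2) P).coeff 0 with hd0def
  have hX2 : (X ^ 2 : ℝ[X]) ∈ transSpan P := by
    have : (X ^ 2 : ℝ[X]) = d2⁻¹ • (hasseDeriv (m-2) P) - (d2⁻¹ * d1) • (X : ℝ[X])
        - (d2⁻¹ * d0) • (1 : ℝ[X]) := by
      rw [e2]
      simp only [smul_eq_C_mul, map_mul]
      rw [mul_add, mul_add, ← mul_assoc, ← mul_assoc, ← C_mul, ← C_mul, ← C_mul,
        inv_mul_cancel₀ hc22ne, C_1]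
      ring
    rw [this]
    exact Submodule.sub_mem _ (Submodule.sub_mem _ (Submodule.smul_mem _ _ hmem2)
      (Submodule.smul_mem _ _ hX)) (Submodule.smul_mem _ _ hone)
  constructor
  · obtain ⟨n, d, κ, hrep⟩ := exists_rep P X hX
    exact ⟨n, d, κ, fun t => by simpa using hrep t⟩
  · obtain ⟨n, d, κ, hrep⟩ := exists_rep P (X ^ 2) hX2
    exact ⟨n, d, κ, fun t => by simpa using hrep t⟩

end PolyPart


/-- `DeepNet σ p q f` says `f : ℝ^p → ℝ^q` is a feedforward neural network with activation `σ`: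
`f(x) = W_l σ(W_{l-1} σ(⋯ σ(W_1 x − b_1) ⋯) − b_{l-1}) − b_l` for some depth `l ≥ 1`,
layer widths, weight matrices and biases, with `σ` applied componentwise. -/
inductive DeepNet (σ : ℝ → ℝ) (p : ℕ) : (q : ℕ) → ((Fin p → ℝ) → (Fin q → ℝ)) → Prop
  | affine {q : ℕ} (W : Matrix (Fin q) (Fin p) ℝ) (b : Fin q → ℝ) :
      DeepNet σ p q (fun x => W.mulVec x - b)
  | layer {m q : ℕ} {g : (Fin p → ℝ) → (Fin m → ℝ)} (hg : DeepNet σ p m g)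
      (W : Matrix (Fin q) (Fin m) ℝ) (b : Fin q → ℝ) :
      DeepNet σ p q (fun x => W.mulVec (fun j => σ (g x j)) - b)

/-- Depth-indexed deep nets. -/
inductive DeepNetD (σ : ℝ → ℝ) (p : ℕ) : ℕ → (q : ℕ) → ((Fin p → ℝ) → (Fin q → ℝ)) → Prop
  | affine {q : ℕ} (W : Matrix (Fin q) (Fin p) ℝ) (b : Fin q → ℝ) :
      DeepNetD σ p 0 q (fun x => W.mulVec x - b)
  | layer {l m q : ℕ} {g : (Fin p → ℝ) → (Fin m → ℝ)} (hg : DeepNetD σ p l m g)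
      (W : Matrix (Fin q) (Fin m) ℝ) (b : Fin q → ℝ) :
      DeepNetD σ p (l + 1) q (fun x => W.mulVec (fun j => σ (g x j)) - b)

lemma DeepNetD.toDeepNet {σ p l q f} (h : DeepNetD σ p l q f) : DeepNet σ p q f := by
  induction h with
  | affine W b => exact .affine W b
  | layer hg W b ih => exact .layer ih W b

lemma DeepNetD.postAffine {σ : ℝ → ℝ} {p l q : ℕ} {f} (h : DeepNetD σ p l q f) {r : ℕ}
    (A : Matrix (Fin r) (Fin q) ℝ) (c : Fin r → ℝ) :
    DeepNetD σ p l r (fun x => A.mulVec (f x) - c) := by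
  cases h with
  | affine W b =>
    have : (fun x : Fin p → ℝ => A.mulVec (W.mulVec x - b) - c)
        = fun x => (A * W).mulVec x - (A.mulVec b + c) := by
      funext x
      rw [Matrix.mulVec_sub, ← Matrix.mulVec_mulVec, sub_sub]
    rw [this]
    exact .affine _ _
  | @layer _ m0 _ g0 hg W b =>
    have : (fun x : Fin p → ℝ => A.mulVec (W.mulVec (fun j => σ (g0 x j)) - b) - c)
        = fun x => (A * W).mulVec (fun j => σ (g0 x j)) - (A.mulVec b + c) := by
      funext x
      rw [Matrix.mulVec_sub, ← Matrix.mulVec_mulVec, sub_sub]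
    rw [this]
    exact .layer hg _ _

lemma DeepNetD.stack {σ : ℝ → ℝ} {p l m n : ℕ} {g h}
    (hg : DeepNetD σ p l m g) (hh : DeepNetD σ p l n h) :
    DeepNetD σ p l (m + n) (fun x => Fin.append (g x) (h x)) := by
  induction hg generalizing n h with
  | @affine q W b =>
    cases hh with
    | affine W' b' =>
      have : (fun x : Fin p → ℝ => Fin.append (W.mulVec x - b) (W'.mulVec x - b'))
          = fun x => (Matrix.of (Fin.append (fun i1 => W i1) (fun i2 => W' i2))).mulVec x
              - Fin.append b b' := by
        funext x i
        refine Fin.addCases (fun i1 => ?_) (fun i2 => ?_) i <;>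
          simp [Matrix.mulVec, dotProduct, Fin.append_left, Fin.append_right]
      rw [this]
      exact .affine _ _
  | @layer l0 m0 q0 g0 hg0 W b ih =>
    cases hh with
    | @layer _ n0 _ h0 hh0 W' b' =>
      have inner := ih hh0
      have : (fun x : Fin p → ℝ => Fin.append
            ((W.mulVec fun j => σ (g0 x j)) - b) ((W'.mulVec fun j => σ (h0 x j)) - b'))
          = fun x => (Matrix.of (Fin.append (fun i1 => Fin.append (W i1) 0)
              (fun i2 => Fin.append 0 (W' i2)))).mulVec
              (fun j => σ (Fin.append (g0 x) (h0 x) j)) - Fin.append b b' := by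
        funext x i
        refine Fin.addCases (fun i1 => ?_) (fun i2 => ?_) i <;>
          simp [Matrix.mulVec, dotProduct, Fin.append_left, Fin.append_right,
            Fin.sum_univ_add]
      rw [this]
      exact .layer inner _ _

def GoodAt (σ : ℝ → ℝ) (p l : ℕ) (h : (Fin p → ℝ) → ℝ) : Prop :=
  ∃ g, DeepNetD σ p l 1 g ∧ ∀ x, g x 0 = h x

def Good (σ : ℝ → ℝ) (p : ℕ) (h : (Fin p → ℝ) → ℝ) : Prop :=
  ∃ l, GoodAt σ p l h

lemma Good.congr {σ p} {f g : (Fin p → ℝ) → ℝ} (hf : Good σ p f) (hfg : ∀ x, f x = g x) :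
    Good σ p g := by
  obtain ⟨l, gn, hgn, hx⟩ := hf
  exact ⟨l, gn, hgn, fun x => (hx x).trans (hfg x)⟩

lemma goodAt_affine {σ : ℝ → ℝ} {p : ℕ} (w : Fin p → ℝ) (c : ℝ) :
    GoodAt σ p 0 (fun x => (∑ j, w j * x j) + c) := by
  refine ⟨fun x => (Matrix.of fun _ j => w j).mulVec x - (fun _ => -c),
    .affine _ _, fun x => ?_⟩
  simp [Matrix.mulVec, dotProduct, sub_neg_eq_add]

lemma GoodAt.layerPhi {σ : ℝ → ℝ} {p l : ℕ} {h : (Fin p → ℝ) → ℝ} (n : ℕ)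
    (d κ : Fin n → ℝ) (φ : ℝ → ℝ) (hrep : ∀ t, ∑ i, d i * σ (t + κ i) = φ t)
    (hh : GoodAt σ p l h) : GoodAt σ p (l + 1) (fun x => φ (h x)) := by
  obtain ⟨g, hg, hgx⟩ := hh
  have mid := hg.postAffine (r := n) (Matrix.of fun _ _ => (1 : ℝ)) (fun i => -κ i)
  refine ⟨_, DeepNetD.layer mid (Matrix.of fun _ i => d i) 0, fun x => ?_⟩
  simp only [Matrix.mulVec, dotProduct, Matrix.of_apply, Pi.sub_apply, Pi.zero_apply,
    Fin.sum_univ_one, one_mul, sub_neg_eq_add, sub_zero]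
  rw [hgx x, ← hrep (h x)]

lemma GoodAt.pad {σ : ℝ → ℝ} {p : ℕ} (n : ℕ) (d κ : Fin n → ℝ)
    (hid : ∀ t : ℝ, ∑ i, d i * σ (t + κ i) = t) {l : ℕ} {h : (Fin p → ℝ) → ℝ}
    (hh : GoodAt σ p l h) : GoodAt σ p (l + 1) h :=
  hh.layerPhi n d κ (fun t => t) hid

lemma GoodAt.padLe {σ : ℝ → ℝ} {p : ℕ} (n : ℕ) (d κ : Fin n → ℝ)
    (hid : ∀ t : ℝ, ∑ i, d i * σ (t + κ i) = t) {l l' : ℕ} (hl : l ≤ l')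
    {h : (Fin p → ℝ) → ℝ} (hh : GoodAt σ p l h) : GoodAt σ p l' h := by
  induction l' with
  | zero => exact (Nat.le_zero.mp hl) ▸ hh
  | succ k ih =>
    rcases Nat.lt_or_ge l (k+1) with h1 | h2
    · exact (ih (Nat.lt_succ_iff.mp h1)).pad n d κ hid
    · exact (Nat.le_antisymm hl h2) ▸ hh

lemma GoodAt.combo {σ : ℝ → ℝ} {p l : ℕ} {h1 h2 : (Fin p → ℝ) → ℝ}
    (hh1 : GoodAt σ p l h1) (hh2 : GoodAt σ p l h2) (a1 a2 c : ℝ) :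
    GoodAt σ p l (fun x => a1 * h1 x + a2 * h2 x + c) := by
  obtain ⟨g1, hg1, hx1⟩ := hh1
  obtain ⟨g2, hg2, hx2⟩ := hh2
  have st := hg1.stack hg2
  have fin := st.postAffine (r := 1)
    (Matrix.of fun _ j => Fin.append (fun _ : Fin 1 => a1) (fun _ : Fin 1 => a2) j)
    (fun _ => -c)
  refine ⟨_, fin, fun x => ?_⟩
  simp only [Matrix.mulVec, dotProduct, Matrix.of_apply, Pi.sub_apply,
    Fin.sum_univ_add, Fin.sum_univ_one, Fin.append_left, Fin.append_right, sub_neg_eq_add]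
  rw [hx1 x, hx2 x]

lemma Good.combo {σ : ℝ → ℝ} {p : ℕ} (n : ℕ) (d κ : Fin n → ℝ)
    (hid : ∀ t : ℝ, ∑ i, d i * σ (t + κ i) = t) {h1 h2 : (Fin p → ℝ) → ℝ}
    (hh1 : Good σ p h1) (hh2 : Good σ p h2) (a1 a2 c : ℝ) :
    Good σ p (fun x => a1 * h1 x + a2 * h2 x + c) := by
  obtain ⟨l1, hg1⟩ := hh1
  obtain ⟨l2, hg2⟩ := hh2
  exact ⟨max l1 l2, (hg1.padLe n d κ hid (le_max_left _ _)).combo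
    (hg2.padLe n d κ hid (le_max_right _ _)) a1 a2 c⟩

lemma Good.sq {σ : ℝ → ℝ} {p : ℕ} (n : ℕ) (d κ : Fin n → ℝ)
    (hsq : ∀ t : ℝ, ∑ i, d i * σ (t + κ i) = t ^ 2) {h : (Fin p → ℝ) → ℝ}
    (hh : Good σ p h) : Good σ p (fun x => h x ^ 2) := by
  obtain ⟨l, hg⟩ := hh
  exact ⟨l + 1, hg.layerPhi n d κ (fun t => t ^ 2) hsq⟩

lemma Good.mul {σ : ℝ → ℝ} {p : ℕ} (n1 : ℕ) (d1 κ1 : Fin n1 → ℝ)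
    (hid : ∀ t : ℝ, ∑ i, d1 i * σ (t + κ1 i) = t)
    (n2 : ℕ) (d2 κ2 : Fin n2 → ℝ)
    (hsq : ∀ t : ℝ, ∑ i, d2 i * σ (t + κ2 i) = t ^ 2)
    {h1 h2 : (Fin p → ℝ) → ℝ} (hh1 : Good σ p h1) (hh2 : Good σ p h2) :
    Good σ p (fun x => h1 x * h2 x) := by
  have hsum : Good σ p (fun x => h1 x + h2 x) := by
    have := Good.combo n1 d1 κ1 hid hh1 hh2 1 1 0
    exact this.congr (fun x => by ring)
  have hs : Good σ p (fun x => (h1 x + h2 x) ^ 2) := Good.sq n2 d2 κ2 hsq hsum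
  have hs1 : Good σ p (fun x => h1 x ^ 2) := Good.sq n2 d2 κ2 hsq hh1
  have hs2 : Good σ p (fun x => h2 x ^ 2) := Good.sq n2 d2 κ2 hsq hh2
  have step1 := Good.combo n1 d1 κ1 hid hs hs1 (1/2) (-(1/2)) 0
  have step2 := Good.combo n1 d1 κ1 hid step1 hs2 1 (-(1/2)) 0
  exact step2.congr (fun x => by ring)

theorem final_assembly (p : ℕ) (σ : ℝ → ℝ)
    (n1 : ℕ) (d1 κ1 : Fin n1 → ℝ) (hid : ∀ t : ℝ, ∑ i, d1 i * σ (t + κ1 i) = t)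
    (n2 : ℕ) (d2 κ2 : Fin n2 → ℝ) (hsq : ∀ t : ℝ, ∑ i, d2 i * σ (t + κ2 i) = t ^ 2) :
    ∀ f : (Fin p → ℝ) → ℝ, Continuous f → ∀ K : Set (Fin p → ℝ), IsCompact K →
      ∀ ε : ℝ, 0 < ε → ∃ g : (Fin p → ℝ) → (Fin 1 → ℝ),
        DeepNet σ p 1 g ∧ ∀ x ∈ K, |f x - g x 0| < ε := by
  intro f hf K hK ε hε
  haveI : CompactSpace K := isCompact_iff_compactSpace.mp hK
  have hconst : ∀ c : ℝ, Good σ p (fun _ => c) := by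
    intro c
    exact Good.congr ⟨0, goodAt_affine 0 c⟩ (fun x => by simp)
  let A : Subalgebra ℝ C(K, ℝ) :=
    { carrier := {F | ∃ h : (Fin p → ℝ) → ℝ,
        Good σ p h ∧ Continuous h ∧ ∀ x : K, F x = h (x : Fin p → ℝ)},
      mul_mem' := by
        rintro F G ⟨h1, hG1, hc1, he1⟩ ⟨h2, hG2, hc2, he2⟩
        exact ⟨fun x => h1 x * h2 x, Good.mul n1 d1 κ1 hid n2 d2 κ2 hsq hG1 hG2,
          hc1.mul hc2, fun x => by simp [he1 x, he2 x]⟩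
      one_mem' := ⟨fun _ => 1, hconst 1, continuous_const, fun x => rfl⟩
      add_mem' := by
        rintro F G ⟨h1, hG1, hc1, he1⟩ ⟨h2, hG2, hc2, he2⟩
        refine ⟨fun x => h1 x + h2 x, ?_, hc1.add hc2, fun x => by simp [he1 x, he2 x]⟩
        exact (Good.combo n1 d1 κ1 hid hG1 hG2 1 1 0).congr (fun x => by ring)
      zero_mem' := ⟨fun _ => 0, hconst 0, continuous_const, fun x => rfl⟩
      algebraMap_mem' := fun r => ⟨fun _ => r, hconst r, continuous_const, fun x => rfl⟩ }
  have hsep : A.SeparatesPoints := by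
    intro x y hxy
    have : ∃ j, (x : Fin p → ℝ) j ≠ (y : Fin p → ℝ) j := by
      by_contra hc
      push_neg at hc
      exact hxy (Subtype.ext (funext hc))
    obtain ⟨j, hj⟩ := this
    refine ⟨fun z : K => (z : Fin p → ℝ) j,
      ⟨⟨fun z : K => (z : Fin p → ℝ) j, ((continuous_apply j).comp continuous_subtype_val)⟩,
        ⟨fun x => x j, ?_, continuous_apply j, fun x => rfl⟩, rfl⟩, hj⟩
    refine Good.congr ⟨0, goodAt_affine (fun j' => if j' = j then 1 else 0) 0⟩ (fun x => ?_)
    simp [ite_mul, Finset.sum_ite_eq]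
  obtain ⟨⟨G, hGA⟩, hG⟩ :=
    ContinuousMap.exists_mem_subalgebra_near_continuous_of_separatesPoints A hsep
      (fun x : K => f x) (hf.comp continuous_subtype_val) ε hε
  obtain ⟨h, ⟨l, gnet, hnet, hval⟩, hcont, hcoin⟩ := hGA
  refine ⟨gnet, hnet.toDeepNet, fun x hx => ?_⟩
  have h1 := hG ⟨x, hx⟩
  rw [show (G : K → ℝ) ⟨x, hx⟩ = h x from hcoin ⟨x, hx⟩] at h1
  rw [hval x]
  calc |f x - h x| = ‖h x - f x‖ := by rw [Real.norm_eq_abs, abs_sub_comm]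
  _ < ε := h1


/-- **Density of deep networks with polynomial activation of degree `m > 1`.**
Every continuous function on `ℝ^p` can be approximated uniformly on compact sets by
feedforward neural networks with activation a polynomial of degree `m > 1`; in particular,
every monomial `x₁^{i₁} ⋯ x_p^{i_p}` lies in the closure of the set of such networks. -/
theorem deepNet_dense_polynomial_activation (p : ℕ) (hp : 0 < p) (P : Polynomial ℝ)
    (hm : 1 < P.natDegree) :
    (∀ f : (Fin p → ℝ) → ℝ, Continuous f → ∀ K : Set (Fin p → ℝ), IsCompact K →
      ∀ ε : ℝ, 0 < ε → ∃ g : (Fin p → ℝ) → (Fin 1 → ℝ),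
        DeepNet (fun t => P.eval t) p 1 g ∧ ∀ x ∈ K, |f x - g x 0| < ε) ∧
    (∀ e : Fin p → ℕ, ∀ K : Set (Fin p → ℝ), IsCompact K → ∀ ε : ℝ, 0 < ε →
      ∃ g : (Fin p → ℝ) → (Fin 1 → ℝ), DeepNet (fun t => P.eval t) p 1 g ∧
        ∀ x ∈ K, |(∏ j, x j ^ e j) - g x 0| < ε) := by
  obtain ⟨⟨n1, d1, κ1, hid⟩, ⟨n2, d2, κ2, hsq⟩⟩ := key_reps P hm
  have main := final_assembly p (fun t => P.eval t) n1 d1 κ1 hid n2 d2 κ2 hsq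
  refine ⟨main, fun e K hK ε hε => ?_⟩
  exact main (fun x => ∏ j, x j ^ e j)
    (continuous_finset_prod Finset.univ fun j _ => (continuous_apply j).pow (e j)) K hK ε hε
end

section
/- Let d ≥ 2, let σ : ℝ → ℝ be smooth and not a polynomial of degree at most d−2, and let (x_i, y_i), i = 1,…,d, be a data set with x_i ∈ ℝ^p pairwise distinct. Consider a shallow network f_{w,b}(x) = W_2 σ(W_1 x − b_1) − b_2 with W_1 ∈ ℝ^{h×p}, b_1 ∈ ℝ^h, W_2 ∈ ℝ^{1×h}, b_2 ∈ ℝ, h ≥ d, with parameter space ℝ^n (n the total number of weights and biases), and let L(w,b) = Σ_{i=1}^d (f_{w,b}(x_i) − y_i)² be the mean squared loss. Then the set M = L^{-1}(0) of global minima is nonempty. -/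
open scoped ContDiff


open Polynomial in
/-- A smooth function whose `k`-th derivative vanishes identically is a polynomial of
degree `< k`. -/
lemma poly_of_iter_zero : ∀ (k : ℕ) (f : ℝ → ℝ), ContDiff ℝ ∞ f →
    (∀ z, iteratedDeriv k f z = 0) →
    ∃ P : ℝ[X], P.degree < (k : WithBot ℕ) ∧ ∀ z, f z = P.eval z := by
  intro k
  induction k with
  | zero =>
    intro f hf h0
    refine ⟨0, by simp, fun z => by simpa using h0 z⟩
  | succ k ih =>
    intro f hf h0
    have hf' : ContDiff ℝ ∞ (deriv f) := (contDiff_infty_iff_deriv.mp hf).2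
    have h0' : ∀ z, iteratedDeriv k (deriv f) z = 0 := by
      intro z
      have := h0 z
      rwa [iteratedDeriv_succ'] at this
    obtain ⟨Q, hQdeg, hQ⟩ := ih (deriv f) hf' h0'
    set R : ℝ[X] := ∑ n ∈ Q.support, C (Q.coeff n / (n + 1)) * X ^ (n + 1) with hRdef
    have hder : R.derivative = Q := by
      rw [hRdef, map_sum]
      have hterm : ∀ n ∈ Q.support,
          derivative (C (Q.coeff n / (n + 1)) * X ^ (n + 1)) = C (Q.coeff n) * X ^ n := by
        intro n _
        rw [derivative_C_mul, derivative_X_pow]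
        simp only [Nat.add_sub_cancel]
        rw [← mul_assoc, ← C_mul]
        congr 2
        push_cast
        field_simp
      rw [Finset.sum_congr rfl hterm]
      exact Q.sum_C_mul_X_pow_eq
    have hdiff : Differentiable ℝ f := hf.differentiable (by simp)
    have hconst : ∀ z, f z - R.eval z = f 0 - R.eval 0 := by
      have hd : Differentiable ℝ (fun z => f z - R.eval z) :=
        hdiff.sub (R.differentiable)
      have hz : ∀ w, deriv (fun z => f z - R.eval z) w = 0 := by
        intro w
        rw [deriv_fun_sub (hdiff w) (R.differentiable w), Polynomial.deriv, hder, hQ]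
        ring
      intro z
      exact is_const_of_deriv_eq_zero hd hz z 0
    refine ⟨R + C (f 0 - R.eval 0), ?_, ?_⟩
    · have hR : R.degree < ((k + 1 : ℕ) : WithBot ℕ) := by
        refine lt_of_le_of_lt (Polynomial.degree_sum_le _ _) ?_
        rw [Finset.sup_lt_iff (by exact WithBot.bot_lt_coe _)]
        intro n hn
        refine lt_of_le_of_lt (Polynomial.degree_C_mul_X_pow_le _ _) ?_
        have h1 : (n : WithBot ℕ) ≤ Q.degree := Polynomial.le_degree_of_ne_zero
          (Polynomial.mem_support_iff.mp hn)
        have h2 : (n : WithBot ℕ) < (k : WithBot ℕ) := lt_of_le_of_lt h1 hQdeg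
        have h3 : n < k := by exact_mod_cast h2
        exact_mod_cast Nat.succ_lt_succ h3
      refine lt_of_le_of_lt (Polynomial.degree_add_le _ _) (max_lt hR ?_)
      refine lt_of_le_of_lt Polynomial.degree_C_le ?_
      exact_mod_cast (by exact_mod_cast Nat.succ_pos k : (0 : WithBot ℕ) < ((k+1 : ℕ) : WithBot ℕ))
    · intro z
      rw [Polynomial.eval_add, Polynomial.eval_C]
      have := hconst z
      linarith


lemma hasDerivAt_iter_affine (σ : ℝ → ℝ) (hσ : ContDiff ℝ ∞ σ) (k : ℕ) (t b a : ℝ) :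
    HasDerivAt (fun a => iteratedDeriv k σ (t * a - b))
      (iteratedDeriv (k + 1) σ (t * a - b) * t) a := by
  have hdk : Differentiable ℝ (iteratedDeriv k σ) :=
    hσ.differentiable_iteratedDeriv k (mod_cast ENat.coe_lt_top k)
  have h1 : HasDerivAt (fun a => t * a - b) t a := by
    simpa using ((hasDerivAt_id a).const_mul t).sub_const b
  have h2 : HasDerivAt (iteratedDeriv k σ) (deriv (iteratedDeriv k σ) (t * a - b)) (t * a - b) :=
    (hdk _).hasDerivAt
  have h3 := h2.comp a h1
  rw [iteratedDeriv_succ]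
  exact h3

lemma exists_injective_proj {d p : ℕ} (x : Fin d → Fin p → ℝ) (hx : Function.Injective x) :
    ∃ v : Fin p → ℝ, Function.Injective (fun i => ∑ l, v l * x i l) := by
  classical
  let Pp : Fin d → Fin d → Polynomial ℝ := fun i j =>
    ∑ l, Polynomial.C (x i l - x j l) * Polynomial.X ^ (l : ℕ)
  have hP : ∀ i j, i ≠ j → Pp i j ≠ 0 := by
    intro i j hij h0
    apply hij
    apply hx
    funext l
    have hc := congrArg (fun q => Polynomial.coeff q (l : ℕ)) h0
    simp only [Pp, Polynomial.finset_sum_coeff, Polynomial.coeff_C_mul,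
      Polynomial.coeff_X_pow, Polynomial.coeff_zero, mul_ite, mul_one, mul_zero] at hc
    rw [Finset.sum_eq_single l (by intro m _ hm; simp [Fin.val_eq_val, (Ne.symm hm)])
      (by simp)] at hc
    simp only [if_true] at hc
    linarith
  have hbad : (⋃ (i : Fin d) (j : Fin d) (_ : i ≠ j), {s : ℝ | (Pp i j).IsRoot s}).Finite := by
    refine Set.finite_iUnion fun i => Set.finite_iUnion fun j => Set.finite_iUnion fun hij => ?_
    exact Polynomial.finite_setOf_isRoot (hP i j hij)
  obtain ⟨s0, hs0⟩ := (hbad.infinite_compl).nonempty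
  refine ⟨fun l => s0 ^ (l : ℕ), ?_⟩
  intro i j hij
  by_contra hne
  apply hs0
  simp only [Set.mem_iUnion]
  refine ⟨i, j, hne, ?_⟩
  show (Pp i j).IsRoot s0
  have : (Pp i j).eval s0 = (∑ l : Fin p, s0 ^ (l:ℕ) * x i l) - ∑ l : Fin p, s0 ^ (l:ℕ) * x j l := by
    simp only [Pp, Polynomial.eval_finset_sum, Polynomial.eval_mul, Polynomial.eval_C,
      Polynomial.eval_pow, Polynomial.eval_X, ← Finset.sum_sub_distrib]
    exact Finset.sum_congr rfl fun l _ => by ring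
  simpa [Polynomial.IsRoot, this] using sub_eq_zero_of_eq hij

/-- **Nonemptiness of the set of global minima (Corollary 2.6, shallow case).**
Let `σ` be smooth and not a polynomial of degree at most `d−2`, and `(xᵢ, yᵢ)` a data set
with pairwise distinct `xᵢ ∈ ℝ^p`. For a shallow network
`f_{w,b}(x) = W₂ σ(W₁x − b₁) − b₂` of width `h ≥ d` and mean squared loss
`L = ∑ᵢ (f_{w,b}(xᵢ) − yᵢ)²`, the set `M = L⁻¹(0)` of global minima is nonempty. -/
theorem global_minima_nonempty (d p h : ℕ) (hd : 2 ≤ d) (σ : ℝ → ℝ)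
    (hσ : ContDiff ℝ (⊤ : ℕ∞) σ)
    (hpoly : ¬ ∃ P : Polynomial ℝ, P.natDegree ≤ d - 2 ∧ ∀ t : ℝ, σ t = P.eval t)
    (x : Fin d → Fin p → ℝ) (hx : Function.Injective x) (y : Fin d → ℝ) (hh : d ≤ h) :
    ∃ (W₁ : Matrix (Fin h) (Fin p) ℝ) (b₁ : Fin h → ℝ) (W₂ : Fin h → ℝ) (b₂ : ℝ),
      ∑ i, ((∑ j, W₂ j * σ (W₁.mulVec (x i) j - b₁ j)) - b₂ - y i) ^ 2 = 0 := by
  classical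
  have hσ' : ContDiff ℝ ∞ σ := hσ.of_le (by simp)
  obtain ⟨v, htinj⟩ := exists_injective_proj x hx
  set t : Fin d → ℝ := fun i => ∑ l, v l * x i l with ht
  set S : Set (Fin d → ℝ) :=
    Set.range (fun ab : ℝ × ℝ => fun i => σ (ab.1 * t i - ab.2)) with hS
  -- Step 1: the span of `S` is everything.
  have hspan : Submodule.span ℝ S = ⊤ := by
    by_contra hne
    obtain ⟨φ, hφ0, hφ⟩ := Submodule.exists_dual_map_eq_bot_of_lt_top
      (lt_top_iff_ne_top.mpr hne) inferInstance
    set c : Fin d → ℝ := fun i => φ (fun j => if i = j then (1:ℝ) else 0) with hc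
    have hφeval : ∀ w : Fin d → ℝ, φ w = ∑ i, w i * c i := by
      intro w
      conv_lhs => rw [pi_eq_sum_univ w]
      rw [map_sum]
      exact Finset.sum_congr rfl fun i _ => by rw [map_smul]; simp [hc, smul_eq_mul]
    have hc0 : c ≠ 0 := by
      intro hzero
      apply hφ0
      apply LinearMap.ext
      intro w
      rw [hφeval w, hzero]
      simp
    have hvan : ∀ a b : ℝ, ∑ i, c i * σ (t i * a - b) = 0 := by
      intro a b
      have hmem : (fun i => σ (a * t i - b)) ∈ Submodule.span ℝ S :=
        Submodule.subset_span ⟨(a, b), rfl⟩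
      have hz : φ (fun i => σ (a * t i - b)) = 0 := by
        have hmem2 := Submodule.mem_map_of_mem (f := φ) hmem
        rw [hφ] at hmem2
        simpa using hmem2
      rw [hφeval] at hz
      rw [← hz]
      exact Finset.sum_congr rfl fun i _ => by rw [mul_comm (t i) a]; ring
    have key : ∀ (k : ℕ) (b a : ℝ),
        ∑ i, c i * (t i ^ k * iteratedDeriv k σ (t i * a - b)) = 0 := by
      intro k
      induction k with
      | zero => intro b a; simpa using hvan a b
      | succ k ih =>
        intro b a
        have hF : HasDerivAt
            (fun a => ∑ i, c i * (t i ^ k * iteratedDeriv k σ (t i * a - b)))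
            (∑ i, (c i * t i ^ k) * (iteratedDeriv (k + 1) σ (t i * a - b) * t i)) a := by
          apply HasDerivAt.fun_sum
          intro i _
          have hterm := (hasDerivAt_iter_affine σ hσ' k (t i) b a).const_mul (c i * t i ^ k)
          simpa [mul_assoc] using hterm
        have h0 : (fun a => ∑ i, c i * (t i ^ k * iteratedDeriv k σ (t i * a - b)))
            = fun _ => (0 : ℝ) := funext fun a => ih b a
        have hzero : HasDerivAt
            (fun a => ∑ i, c i * (t i ^ k * iteratedDeriv k σ (t i * a - b))) 0 a := by
          rw [h0]; exact hasDerivAt_const a 0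
        have huniq := hF.unique hzero
        rw [← huniq]
        exact Finset.sum_congr rfl fun i _ => by ring
    have hfac : ∀ (k : ℕ) (b : ℝ), (∑ i, c i * t i ^ k) * iteratedDeriv k σ (-b) = 0 := by
      intro k b
      have hk := key k b 0
      simp only [mul_zero, zero_sub] at hk
      rw [Finset.sum_mul, ← hk]
      exact Finset.sum_congr rfl fun i _ => by ring
    have hexk : ∃ k : Fin d, ∀ z, iteratedDeriv (k : ℕ) σ z = 0 := by
      by_contra hk
      push_neg at hk
      have hsum : ∀ k : Fin d, ∑ i, c i * t i ^ (k : ℕ) = 0 := by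
        intro k
        obtain ⟨z, hz⟩ := hk k
        have hfz := hfac k (-z)
        rw [neg_neg] at hfz
        rcases mul_eq_zero.mp hfz with hcase | hcase
        · exact hcase
        · exact absurd hcase hz
      have hdet : ((Matrix.vandermonde t).transpose).det ≠ 0 := by
        rw [Matrix.det_transpose, Matrix.det_vandermonde]
        refine Finset.prod_ne_zero_iff.mpr fun i _ => Finset.prod_ne_zero_iff.mpr fun j hj => ?_
        exact sub_ne_zero_of_ne fun he => (Finset.mem_Ioi.mp hj).ne' (by rw [htinj he])
      apply hc0
      refine Matrix.eq_zero_of_mulVec_eq_zero hdet ?_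
      funext k
      have := hsum k
      simpa [Matrix.mulVec, Matrix.transpose_apply, Matrix.vandermonde, dotProduct,
        mul_comm] using this
    obtain ⟨k, hk⟩ := hexk
    obtain ⟨P, hPdeg, hP⟩ := poly_of_iter_zero k σ hσ' hk
    apply hpoly
    refine ⟨P, ?_, fun z => hP z⟩
    rcases eq_or_ne P 0 with hP0 | hP0
    · simp [hP0]
    · have h1 : (P.natDegree : WithBot ℕ) < ((k : ℕ) : WithBot ℕ) := by
        rw [← Polynomial.degree_eq_natDegree hP0]; exact hPdeg
      have h2 : P.natDegree < (k : ℕ) := by exact_mod_cast h1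
      have h3 : (k : ℕ) < d := k.isLt
      omega
  -- Step 2: extract a basis of size `d` from `S` and solve for the outer weights.
  obtain ⟨s, hsS, hspan2, hli⟩ := exists_linearIndependent ℝ S
  rw [hspan] at hspan2
  have hBtop : ⊤ ≤ Submodule.span ℝ (Set.range ((↑) : s → (Fin d → ℝ))) := by
    rw [Subtype.range_coe]
    exact hspan2.ge
  let B : Module.Basis s ℝ (Fin d → ℝ) := Module.Basis.mk hli hBtop
  have : Fintype s := FiniteDimensional.fintypeBasisIndex B
  have hcard : Fintype.card s = d := by
    have h1 := Module.finrank_eq_card_basis B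
    rw [Module.finrank_fin_fun] at h1
    exact h1.symm
  let e : Fin d ≃ s := (Fintype.equivFinOfCardEq hcard).symm
  have hmem : ∀ j : Fin d, ((e j : Fin d → ℝ)) ∈ S := fun j => hsS (e j).2
  choose ab hab using hmem
  have hy : ∃ cc : Fin d → ℝ, ∑ j, cc j • ((e j : Fin d → ℝ)) = y := by
    rw [← Submodule.mem_span_range_iff_exists_fun ℝ]
    have hrange : Set.range (fun j : Fin d => ((e j : Fin d → ℝ))) = s := by
      have hcomp : (fun j : Fin d => ((e j : Fin d → ℝ))) = Subtype.val ∘ e := rfl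
      rw [hcomp, Set.range_comp, Equiv.range_eq_univ, Set.image_univ, Subtype.range_coe]
    rw [hrange, hspan2]
    trivial
  obtain ⟨cc, hcc⟩ := hy
  have hcci : ∀ i, ∑ j : Fin d, cc j * σ ((ab j).1 * t i - (ab j).2) = y i := by
    intro i
    have h1 := congrFun hcc i
    simp only [Finset.sum_apply, Pi.smul_apply, smul_eq_mul] at h1
    rw [← h1]
    refine Finset.sum_congr rfl fun j _ => ?_
    rw [← hab j]
  set A : Fin h → ℝ := fun j => if hj : (j : ℕ) < d then (ab ⟨j, hj⟩).1 else 0 with hA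
  set Bv : Fin h → ℝ := fun j => if hj : (j : ℕ) < d then (ab ⟨j, hj⟩).2 else 0 with hBv
  set Cv : Fin h → ℝ := fun j => if hj : (j : ℕ) < d then cc ⟨j, hj⟩ else 0 with hCv
  refine ⟨fun j l => A j * v l, Bv, Cv, 0, ?_⟩
  have hmv : ∀ (i : Fin d) (j : Fin h),
      Matrix.mulVec (fun j l => A j * v l) (x i) j = A j * t i := by
    intro i j
    simp only [Matrix.mulVec, dotProduct, ht, Finset.mul_sum]
    exact Finset.sum_congr rfl fun l _ => by ring
  have hkey : ∀ i, (∑ j : Fin h, Cv j * σ (A j * t i - Bv j)) = y i := by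
    intro i
    have emb : Function.Injective (Fin.castLE hh) := Fin.castLE_injective hh
    rw [← Finset.sum_subset (Finset.subset_univ
      ((Finset.univ : Finset (Fin d)).map ⟨Fin.castLE hh, emb⟩)) ?_]
    · rw [Finset.sum_map, ← hcci i]
      refine Finset.sum_congr rfl fun k _ => ?_
      have hk : ((Fin.castLE hh k : Fin h) : ℕ) < d := by simp
      simp only [hA, hBv, hCv, Function.Embedding.coeFn_mk, Fin.coe_castLE, dif_pos k.isLt,
        Fin.eta]
    · intro j _ hj
      have hjd : ¬ (j : ℕ) < d := by
        intro hlt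
        apply hj
        simp only [Finset.mem_map, Finset.mem_univ, Function.Embedding.coeFn_mk]
        exact ⟨(⟨(j : ℕ), hlt⟩ : Fin d), trivial, Fin.ext rfl⟩
      rw [hCv]
      simp only [dif_neg hjd, zero_mul]
  refine Finset.sum_eq_zero fun i _ => ?_
  have hterm : (∑ j : Fin h, Cv j * σ (Matrix.mulVec (fun j l => A j * v l) (x i) j - Bv j))
      = y i := by
    rw [← hkey i]
    exact Finset.sum_congr rfl fun j _ => by rw [hmv i j]
  rw [hterm]
  ring
end

section
/- Let d ≥ 2, let I ⊆ ℝ be a nonempty open interval, and let f : I → ℝ be infinitely differentiable such that f is not equal on I to any polynomial of degree at most d−2 (equivalently, f^{(d−1)} is not identically zero on I). Then there exists a point x_0 ∈ I such that f^{(k)}(x_0) ≠ 0 for every k = 0, 1, …, d−1. -/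
open Set Polynomial

private lemma iterWithin_eq_iter {f : ℝ → ℝ} {I : Set ℝ} (hI : IsOpen I) (k : ℕ)
    {x : ℝ} (hx : x ∈ I) : iteratedDerivWithin k f I x = iteratedDeriv k f x := by
  unfold iteratedDerivWithin iteratedDeriv
  rw [iteratedFDerivWithin_of_isOpen k hI hx]

private lemma poly_of_iteratedDeriv_zero {I : Set ℝ} (hI : IsOpen I) (hconv : Convex ℝ I)
    (hne : I.Nonempty) :
    ∀ n : ℕ, ∀ f : ℝ → ℝ, ContDiffOn ℝ (⊤ : ℕ∞) f I → (∀ x ∈ I, iteratedDeriv n f x = 0) →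
    ∃ P : Polynomial ℝ, P.degree < (n : WithBot ℕ) ∧ ∀ x ∈ I, f x = P.eval x := by
  intro n
  induction n with
  | zero =>
    intro f hf h0
    refine ⟨0, by simp [Polynomial.degree_zero], fun x hx => ?_⟩
    have := h0 x hx
    rw [iteratedDeriv_zero] at this
    simp [this]
  | succ n IH =>
    intro f hf h0
    have hf' : ContDiffOn ℝ (⊤ : ℕ∞) (deriv f) I := hf.deriv_of_isOpen hI (by simp)
    have h0' : ∀ x ∈ I, iteratedDeriv n (deriv f) x = 0 := fun x hx => by
      rw [← iteratedDeriv_succ']; exact h0 x hx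
    obtain ⟨Q, hQdeg, hQ⟩ := IH (deriv f) hf' h0'
    set R : Polynomial ℝ := Q.sum fun i c => C (c / (i + 1)) * X ^ (i + 1) with hR
    have hderivR : derivative R = Q := by
      rw [hR, Polynomial.sum_def, map_sum]
      have : ∀ i ∈ Q.support,
          derivative (C (Q.coeff i / (i + 1)) * X ^ (i + 1)) = C (Q.coeff i) * X ^ i := by
        intro i _
        rw [Polynomial.derivative_C_mul_X_pow]
        have h1 : ((i : ℝ) + 1) ≠ 0 := by positivity
        have h2 : Q.coeff i / ((i : ℝ) + 1) * ((i : ℝ) + 1) = Q.coeff i :=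
          div_mul_cancel₀ _ h1
        simp only [Nat.cast_add, Nat.cast_one, h2, Nat.add_sub_cancel]
      rw [Finset.sum_congr rfl this]
      exact Polynomial.sum_C_mul_X_pow_eq Q
    have hdegR : R.degree < ((n + 1 : ℕ) : WithBot ℕ) := by
      rw [hR, Polynomial.sum_def]
      refine lt_of_le_of_lt (Polynomial.degree_sum_le _ _) ?_
      rw [Finset.sup_lt_iff (by exact WithBot.bot_lt_coe _)]
      intro i hi
      have hiQ : (i : WithBot ℕ) ≤ Q.degree :=
        Polynomial.le_degree_of_ne_zero (Polynomial.mem_support_iff.mp hi)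
      have hin : i < n := by exact_mod_cast lt_of_le_of_lt hiQ hQdeg
      calc degree (C (Q.coeff i / (i + 1)) * X ^ (i + 1)) ≤ ((i + 1 : ℕ) : WithBot ℕ) :=
            Polynomial.degree_C_mul_X_pow_le _ _
        _ < ((n + 1 : ℕ) : WithBot ℕ) := by exact_mod_cast Nat.succ_lt_succ hin
    obtain ⟨a, ha⟩ := hne
    refine ⟨R + C (f a - R.eval a), ?_, ?_⟩
    · refine lt_of_le_of_lt (Polynomial.degree_add_le _ _) (max_lt hdegR ?_)
      exact lt_of_le_of_lt (Polynomial.degree_C_le) (by exact_mod_cast WithBot.coe_lt_coe.mpr (Nat.succ_pos n))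
    · have hfd : DifferentiableOn ℝ f I := hf.differentiableOn (by simp)
      have hdiff : DifferentiableOn ℝ (fun y => f y - R.eval y) I :=
        hfd.sub (R.differentiable.differentiableOn)
      have hzero : ∀ x ∈ I, fderivWithin ℝ (fun y => f y - R.eval y) I x = 0 := by
        intro x hx
        have hfa : HasDerivAt f (deriv f x) x :=
          (hfd.differentiableAt (hI.mem_nhds hx)).hasDerivAt
        have hRa : HasDerivAt (fun y => R.eval y) (Q.eval x) x := by
          have := R.hasDerivAt x
          rwa [hderivR] at this
        have hd0 : HasDerivAt (fun y => f y - R.eval y) 0 x := by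
          have := hfa.sub hRa
          rwa [hQ x hx, sub_self] at this
        rw [fderivWithin_of_isOpen hI hx, hd0.hasFDerivAt.fderiv]
        ext
        simp
      intro x hx
      have := Convex.is_const_of_fderivWithin_eq_zero hconv hdiff hzero hx ha
      simp only [Polynomial.eval_add, Polynomial.eval_C]
      linarith [this]

/-- **Existence of a point where the first `d` derivatives all do not vanish (the Claim).**
If `f` is infinitely differentiable on a nonempty open interval `I` and is not equal on `I`
to any polynomial of degree at most `d−2`, then there is a point `x₀ ∈ I` at which
`f^{(k)}(x₀) ≠ 0` for every `k = 0, 1, …, d−1`. -/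
theorem exists_point_derivatives_ne_zero (d : ℕ) (hd : 2 ≤ d) (I : Set ℝ)
    (hI : IsOpen I) (hne : I.Nonempty) (hconn : I.OrdConnected)
    (f : ℝ → ℝ) (hf : ContDiffOn ℝ (⊤ : ℕ∞) f I)
    (hnp : ¬ ∃ P : Polynomial ℝ, P.natDegree ≤ d - 2 ∧ ∀ x ∈ I, f x = P.eval x) :
    ∃ x₀ ∈ I, ∀ k ≤ d - 1, iteratedDerivWithin k f I x₀ ≠ 0 := by
  classical
  set g : ℕ → ℝ → ℝ := fun k => iteratedDeriv k f with hg
  have hIW : ∀ k, ∀ x ∈ I, iteratedDerivWithin k f I x = g k x :=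
    fun k x hx => iterWithin_eq_iter hI k hx
  have hconv : Convex ℝ I := hconn.convex
  have hgcont : ∀ k, ContinuousOn (g k) I := fun k =>
    (hf.continuousOn_iteratedDerivWithin (by exact_mod_cast le_top) hI.uniqueDiffOn).congr
      (fun x hx => (hIW k x hx).symm)
  have hbase : ∃ x ∈ I, g (d - 1) x ≠ 0 := by
    by_contra h
    push_neg at h
    obtain ⟨P, hPdeg, hP⟩ := poly_of_iteratedDeriv_zero hI hconv hne (d - 1) f hf h
    apply hnp
    refine ⟨P, ?_, hP⟩
    by_cases hP0 : P = 0
    · simp [hP0]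
    · have := (Polynomial.natDegree_lt_iff_degree_lt hP0).mpr hPdeg
      omega
  have key : ∀ m, m ≤ d - 1 → ∃ a b, a < b ∧ Set.Ioo a b ⊆ I ∧
      ∀ x ∈ Set.Ioo a b, ∀ j, j ≤ d - 1 → d - 1 - m ≤ j → g j x ≠ 0 := by
    intro m
    induction m with
    | zero =>
      intro _
      obtain ⟨x, hxI, hx0⟩ := hbase
      have hcont : ContinuousAt (g (d - 1)) x :=
        (hgcont (d - 1)).continuousAt (hI.mem_nhds hxI)
      have hev : ∀ᶠ y in nhds x, y ∈ I ∧ g (d - 1) y ≠ 0 :=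
        (hI.eventually_mem hxI).and (hcont.eventually_ne hx0)
      obtain ⟨ε, hε, hball⟩ := Metric.eventually_nhds_iff_ball.mp hev
      refine ⟨x - ε, x + ε, by linarith, ?_, ?_⟩
      · intro y hy
        exact (hball y (by rwa [Real.ball_eq_Ioo])).1
      · intro y hy j hj1 hj2
        have hj : j = d - 1 := by omega
        subst hj
        exact (hball y (by rwa [Real.ball_eq_Ioo])).2
    | succ m IH =>
      intro hm1
      obtain ⟨a, b, hab, hsub, hne0⟩ := IH (by omega)
      set k := d - 1 - (m + 1) with hk
      have hk1 : k + 1 ≤ d - 1 := by omega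
      have atmost : ∀ u v, u ∈ Set.Ioo a b → v ∈ Set.Ioo a b → u < v →
          g k u = 0 → g k v = 0 → False := by
        intro u v hu hv huv hgu hgv
        have hIcc : Set.Icc u v ⊆ Set.Ioo a b := Set.Icc_subset_Ioo hu.1 hv.2
        have hcont : ContinuousOn (g k) (Set.Icc u v) := (hgcont k).mono (hIcc.trans hsub)
        obtain ⟨c, hc, hc0⟩ := exists_deriv_eq_zero huv hcont (by rw [hgu, hgv])
        have hcm : c ∈ Set.Ioo a b := hIcc ⟨le_of_lt hc.1, le_of_lt hc.2⟩
        refine hne0 c hcm (k + 1) hk1 (by omega) ?_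
        show iteratedDeriv (k + 1) f c = 0
        rw [iteratedDeriv_succ]
        exact hc0
      by_cases hz : ∀ x ∈ Set.Ioo a b, g k x ≠ 0
      · refine ⟨a, b, hab, hsub, fun x hx j hj1 hj2 => ?_⟩
        rcases eq_or_lt_of_le hj2 with he | hl
        · rw [← he]; exact hz x hx
        · exact hne0 x hx j hj1 (by omega)
      · push_neg at hz
        obtain ⟨z, hz1, hz2⟩ := hz
        refine ⟨z, b, hz1.2, fun x hx => hsub ⟨lt_trans hz1.1 hx.1, hx.2⟩, ?_⟩
        intro x hx j hj1 hj2
        have hxab : x ∈ Set.Ioo a b := ⟨lt_trans hz1.1 hx.1, hx.2⟩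
        rcases eq_or_lt_of_le hj2 with he | hl
        · intro heq
          exact atmost z x hz1 hxab hx.1 hz2 (by rw [he]; exact heq)
        · exact hne0 x hxab j hj1 (by omega)
  obtain ⟨a, b, hab, hsub, h0⟩ := key (d - 1) le_rfl
  have hmid : (a + b) / 2 ∈ Set.Ioo a b := ⟨by linarith, by linarith⟩
  refine ⟨(a + b) / 2, hsub hmid, fun k hk => ?_⟩
  rw [hIW k _ (hsub hmid)]
  exact h0 _ hmid k hk (by omega)
end

section
/- Let σ : ℝ → ℝ be locally integrable and not almost everywhere equal to an affine function, and let (x_i, z_i), i = 1,…,d, be a data set with x_i ∈ ℝ^p pairwise distinct and z_i ∈ ℝ^q. Then there exists a feedforward neural network g : ℝ^p → ℝ^q with activation σ such that g(x_i) = z_i for all i = 1,…,d. -/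
open MeasureTheory

/-!
Project the data to distinct reals `tᵢ = a ⬝ᵥ xᵢ` and let `Vₗ ⊆ ℝᵈ` be the space of value vectors
`(φ (xᵢ))ᵢ` of scalar networks `φ` with `ℓ` hidden layers; once `Vₗ = ℝᵈ`, every column of `z` is
realised at the common depth `ℓ` and these networks are stacked. If `V₁ ≠ ℝᵈ`, a nonzero `c`
annihilates it, so `∑ cᵢ σ (y + w tᵢ) = 0` for all `w, y`. Eliminating the nodes one at a time
turns this into Fréchet's equation `Δ_{h₁} ⋯ Δ_{h_{d-1}} σ = 0`, whose locally integrable solutions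
are polynomials: the top coefficient of the polynomial `Δ_h σ` is additive and integrable in `h`,
hence linear, which lowers the order of the equation. Since `σ` is not affine it has degree
`m ≥ 2`, and comparing coefficients of `s ↦ σ (s v)` and `s ↦ σ (v + s)` (then polarising) shows
that `V_{ℓ+1}` contains the products of elements of `Vₗ`. So `V_ℓ` contains `tʲ` for `j ≤ 2^ℓ`,
and is all of `ℝᵈ` by Lagrange interpolation.
-/

open Polynomial Finset
open scoped fwdDiff

namespace Polynomial

variable {R : Type*}

theorem coeff_taylor_of_natDegree_le [CommSemiring R] {P : R[X]} {n : ℕ} (hn : P.natDegree ≤ n)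
    (r : R) : (taylor r P).coeff n = P.coeff n := by
  rcases hn.eq_or_lt with rfl | hlt
  · exact coeff_taylor_natDegree r P
  · rw [coeff_eq_zero_of_natDegree_lt hlt,
      coeff_eq_zero_of_natDegree_lt (by rwa [natDegree_taylor])]

theorem fwdDiff_eval [CommRing R] (P : R[X]) (h : R) :
    Δ_[h] P.eval = (taylor h P - P).eval := by
  ext x
  simp [fwdDiff, taylor_eval]

theorem degree_taylor_sub_lt [CommRing R] {P : R[X]} {K : ℕ} (hP : P.degree < K + 1) (h : R) :
    (taylor h P - P).degree < K := by
  have hPK : P.natDegree ≤ K := natDegree_le_iff_coeff_eq_zero.2 fun m hm =>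
    (degree_lt_iff_coeff_zero _ _).1 hP m (by exact_mod_cast hm)
  refine (degree_lt_iff_coeff_zero _ _).2 fun m hm => ?_
  rw [coeff_sub, coeff_taylor_of_natDegree_le (hPK.trans (by exact_mod_cast hm)), sub_self]

theorem exists_coeff_eq_sum_mul_eval [Field R] [CharZero R] (n k : ℕ) :
    ∃ v w : Fin n → R, ∀ Q : R[X], Q.degree < n → Q.coeff k = ∑ i, w i * Q.eval (v i) := by
  classical
  let v : Fin n → R := fun i => i
  have hv : Set.InjOn v (univ : Finset (Fin n)) := fun i _ j _ hij => by
    simpa [v, Fin.val_inj] using hij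
  let L := (lcoeff R k).comp (Lagrange.interpolate univ v)
  refine ⟨v, fun i => L fun j => if i = j then 1 else 0, fun Q hQ => ?_⟩
  conv_lhs => rw [Lagrange.eq_interpolate (f := Q) hv (by simpa using hQ)]
  simp_rw [mul_comm _ (Q.eval _), ← smul_eq_mul]
  exact L.pi_apply_eq_sum_univ _

theorem degree_sub_C_mul_taylor_X_pow_sub_lt [Field R] [CharZero R] {K : ℕ} {Q : R[X]} {γ h : R}
    (hQ : Q.degree < ↑(K + 1)) (hγ : Q.coeff K = γ * h) :
    (Q - C (γ / (K + 1)) * (taylor h (X ^ (K + 1)) - X ^ (K + 1))).degree < ↑K := by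
  refine (degree_lt_iff_coeff_zero _ _).2 fun m hm => ?_
  rw [coeff_sub, coeff_C_mul, coeff_sub, taylor_X_pow, coeff_X_add_C_pow, coeff_X_pow]
  rcases hm.eq_or_lt with rfl | hm
  · rw [hγ, Nat.choose_succ_self_right, if_neg (by omega), Nat.add_sub_cancel_left]
    push_cast
    field_simp
    ring
  · have hQm : Q.coeff m = 0 := (degree_lt_iff_coeff_zero _ _).1 hQ m hm
    rcases (show K + 1 ≤ m from hm).eq_or_lt with rfl | hm
    · simp [hQm]
    · simp [hQm, Nat.choose_eq_zero_of_lt hm, hm.ne']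

end Polynomial

theorem intervalIntegrable_comp_add_right {f : ℝ → ℝ}
    (hf : ∀ a b, IntervalIntegrable f volume a b) (c a b : ℝ) :
    IntervalIntegrable (fun x => f (x + c)) volume a b :=
  (IntervalIntegrable.comp_add_right_iff (by finiteness)).2 (hf _ _)

theorem eq_mul_of_map_add_of_intervalIntegrable {α : ℝ → ℝ}
    (hadd : ∀ a b, α (a + b) = α a + α b) (hα : ∀ a b, IntervalIntegrable α volume a b)
    (h : ℝ) : α h = α 1 * h := by
  -- `α h = ∫ s in h..h+1, α s - ∫ s in 0..1, α s` exhibits `α` as continuous.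
  have hshift : ∀ h, ∫ s in h..h + 1, α s = α h + ∫ s in (0 : ℝ)..1, α s := fun h => by
    have := intervalIntegral.integral_comp_add_left α h (a := 0) (b := 1)
    rw [add_zero] at this
    simp_rw [← this, hadd h]
    rw [intervalIntegral.integral_add intervalIntegrable_const (hα 0 1)]
    simp
  have hcont : Continuous α := by
    have hF := intervalIntegral.continuous_primitive hα 0
    convert ((hF.comp (continuous_add_const 1)).sub hF).sub
      (continuous_const (y := ∫ s in (0 : ℝ)..1, α s)) using 1
    ext h
    simp only [Pi.sub_apply, Function.comp_apply]
    rw [← intervalIntegral.integral_add_adjacent_intervals (hα 0 h) (hα h (h + 1)), hshift]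
    ring
  simpa [mul_comm] using map_real_smul (AddMonoidHom.mk' α hadd) hcont h 1

theorem exists_coeff_eq_mul_of_fwdDiff_eq_eval {f : ℝ → ℝ}
    (hf : ∀ a b, IntervalIntegrable f volume a b) {k : ℕ} {Q : ℝ → ℝ[X]}
    (hQ : ∀ h, (Q h).degree < k + 1) (hfQ : ∀ h, Δ_[h] f = (Q h).eval) :
    ∃ γ : ℝ, ∀ h, (Q h).coeff k = γ * h := by
  have hadd : ∀ h₁ h₂, (Q (h₁ + h₂)).coeff k = (Q h₁).coeff k + (Q h₂).coeff k := by
    intro h₁ h₂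
    have hsplit : Q (h₁ + h₂) = taylor h₂ (Q h₁) + Q h₂ := Polynomial.funext fun r => by
      rw [eval_add, taylor_eval, ← congrFun (hfQ _), ← congrFun (hfQ _), ← congrFun (hfQ _)]
      simp only [fwdDiff]
      ring_nf
    have hdeg : (Q h₁).natDegree ≤ k := natDegree_le_iff_coeff_eq_zero.2 fun m hm =>
      (degree_lt_iff_coeff_zero _ _).1 (hQ h₁) m (by exact_mod_cast hm)
    rw [hsplit, coeff_add, coeff_taylor_of_natDegree_le hdeg]
  -- `h ↦ (Q h).coeff k` is a fixed combination of translates of `f`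
  obtain ⟨v, w, hvw⟩ := exists_coeff_eq_sum_mul_eval (R := ℝ) (k + 1) k
  have hint : ∀ a b, IntervalIntegrable (fun h => (Q h).coeff k) volume a b := by
    intro a b
    simp_rw [fun h => hvw (Q h) (by exact_mod_cast hQ h), ← congrFun (hfQ _)]
    have hterm : ∀ i ∈ univ, IntervalIntegrable (fun h => w i * Δ_[h] f (v i)) volume a b :=
      fun i _ => by
        simpa only [fwdDiff, add_comm (v i)] using
          ((intervalIntegrable_comp_add_right hf (v i) a b).sub intervalIntegrable_const).const_mul
            (w i)
    simpa only [← Finset.sum_fn] using IntervalIntegrable.sum univ hterm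
  exact ⟨(Q 1).coeff k, eq_mul_of_map_add_of_intervalIntegrable hadd hint⟩

-- Fréchet's functional equation `Δ_[h₁] ⋯ Δ_[h_K] f = 0` for all steps `h₁, …, h_K`.
def DiffsVanish : ℕ → (ℝ → ℝ) → Prop
  | 0, f => f = 0
  | K + 1, f => ∀ h, DiffsVanish K (Δ_[h] f)

namespace DiffsVanish

theorem comp_add_right : ∀ {K : ℕ} {f : ℝ → ℝ}, DiffsVanish K f → ∀ c : ℝ,
    DiffsVanish K (fun x => f (x + c))
  | 0, _, hf, _ => by subst hf; rfl
  | K + 1, f, hf, c => fun h => by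
      rw [show Δ_[h] (fun x => f (x + c)) = fun x => Δ_[h] f (x + c) from
        funext (fwdDiff_comp_add h f c)]
      exact comp_add_right (hf h) c

theorem of_const_smul {c : ℝ} (hc : c ≠ 0) : ∀ {K : ℕ} {f : ℝ → ℝ},
    DiffsVanish K (c • f) → DiffsVanish K f
  | 0, _, hf => (smul_eq_zero.1 hf).resolve_left hc
  | _ + 1, _, hf => fun h => of_const_smul hc (by rw [← fwdDiff_const_smul]; exact hf h)

theorem eval_of_degree_lt : ∀ {K : ℕ} {P : ℝ[X]}, P.degree < K → DiffsVanish K P.eval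
  | 0, P, hP => by
      rw [Nat.cast_zero, Nat.WithBot.lt_zero_iff, degree_eq_bot] at hP
      subst hP
      exact _root_.funext fun x => eval_zero
  | _ + 1, _, hP => fun h => by
      rw [fwdDiff_eval]
      exact eval_of_degree_lt (degree_taylor_sub_lt (by exact_mod_cast hP) h)

theorem exists_polynomial : ∀ {K : ℕ} {f : ℝ → ℝ},
    (∀ a b, IntervalIntegrable f volume a b) → DiffsVanish K f →
    ∃ P : ℝ[X], P.degree < K ∧ f = P.eval
  | 0, _, _, hf => ⟨0, by simp, by rw [hf]; ext; simp⟩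
  | 1, f, _, hf => ⟨C (f 0), (degree_C_le).trans_lt (by norm_num), funext fun x => by
      simpa [fwdDiff, sub_eq_zero] using congrFun (hf x) 0⟩
  | K + 2, f, hfi, hf => by
    have hΔ : ∀ h, ∃ Q : ℝ[X], Q.degree < ↑(K + 1) ∧ Δ_[h] f = Q.eval := fun h =>
      exists_polynomial (fun a b => (intervalIntegrable_comp_add_right hfi h a b).sub (hfi a b))
        (hf h)
    choose Q hQdeg hQ using hΔ
    obtain ⟨γ, hγ⟩ := exists_coeff_eq_mul_of_fwdDiff_eq_eval hfi (by exact_mod_cast hQdeg) hQ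
    -- subtracting `c x ^ (K + 1)` kills the top coefficient of every `Δ_[h] f`
    set c : ℝ := γ / (K + 1)
    have hg : DiffsVanish (K + 1) (fun x => f x - c * x ^ (K + 1)) := fun h => by
      have : Δ_[h] (fun x => f x - c * x ^ (K + 1)) =
          (Q h - C c * (taylor h (X ^ (K + 1)) - X ^ (K + 1))).eval := by
        ext x
        simp [fwdDiff, ← congrFun (hQ h)]
        ring
      rw [this]
      exact eval_of_degree_lt (degree_sub_C_mul_taylor_X_pow_sub_lt (hQdeg h) (hγ h))
    obtain ⟨G, hGdeg, hG⟩ := exists_polynomial (fun a b => (hfi a b).sub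
      ((by fun_prop : Continuous fun x => c * x ^ (K + 1)).intervalIntegrable a b)) hg
    refine ⟨G + C c * X ^ (K + 1), ?_, funext fun x => ?_⟩
    · refine (degree_add_le _ _).trans_lt (max_lt (hGdeg.trans ?_) ?_)
      · exact_mod_cast (by omega : K + 1 < K + 2)
      · exact (degree_C_mul_X_pow_le _ _).trans_lt (by exact_mod_cast (by omega : K + 1 < K + 2))
    · simpa [sub_eq_iff_eq_add] using congrFun hG x

end DiffsVanish

theorem diffsVanish_of_forall_sum_eq_zero {ι : Type*} [DecidableEq ι] {a : ι → ℝ}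
    (ha : Function.Injective a) (n : ℕ) : ∀ (s : Finset ι), #s = n + 1 → ∀ g : ι → ℝ → ℝ,
    (∀ w y, ∑ i ∈ s, g i (y + w * a i) = 0) → ∀ i ∈ s, DiffsVanish n (g i) := by
  induction n with
  | zero =>
    intro s hs g hg i hi
    obtain ⟨j, rfl⟩ := card_eq_one.1 hs
    rw [mem_singleton.1 hi]
    ext y
    simpa using hg 0 y
  | succ n ih =>
    intro s hs g hg i hi h
    obtain ⟨e, he, hei⟩ := exists_mem_ne (by omega : 1 < #s) i
    -- Comparing the identity at `(w + v, y)` and at `(w, y + v * a e)` eliminates the index `e`.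
    set v := h / (a i - a e)
    set g' : ι → ℝ → ℝ := fun j z => g j (z + v * a j) - g j (z + v * a e)
    have hg' : ∀ w y, ∑ j ∈ s.erase e, g' j (y + w * a j) = 0 := by
      intro w y
      rw [sum_erase s (sub_self _), sum_sub_distrib]
      simp_rw [show ∀ j, y + w * a j + v * a j = y + (w + v) * a j from fun j => by ring,
        show ∀ j, y + w * a j + v * a e = y + v * a e + w * a j from fun j => by ring, hg,
        sub_zero]
    have hΔ : Δ_[h] (g i) = fun z => g' i (z + -(v * a e)) := by
      have hv : v * a i = v * a e + h := by
        simp only [v]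
        field_simp [sub_ne_zero.2 (ha.ne hei.symm)]
        ring
      ext z
      simp only [g', fwdDiff, hv]
      ring_nf
    rw [hΔ]
    exact (ih (s.erase e) (by rw [card_erase_of_mem he]; omega) g' hg' i
      (mem_erase.2 ⟨hei.symm, hi⟩)).comp_add_right _

theorem exists_polynomial_of_sum_mul_comp_eq_zero {ι : Type*} [Fintype ι] {σ : ℝ → ℝ}
    (hσ : ∀ a b, IntervalIntegrable σ volume a b) {t c : ι → ℝ} (ht : Function.Injective t)
    (hc : c ≠ 0) (h : ∀ w y, ∑ i, c i * σ (y + w * t i) = 0) : ∃ P : ℝ[X], σ = P.eval := by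
  classical
  obtain ⟨i, hi⟩ := Function.ne_iff.1 hc
  have hcard : #(univ : Finset ι) = (Fintype.card ι - 1) + 1 := by
    have := Fintype.card_pos_iff.2 ⟨i⟩
    rw [card_univ]
    omega
  obtain ⟨P, -, hP⟩ := ((diffsVanish_of_forall_sum_eq_zero ht _ univ hcard (fun j => c j • σ) h
    i (mem_univ i)).of_const_smul hi).exists_polynomial hσ
  exact ⟨P, hP⟩

theorem LinearMap.apply_eq_dotProduct {K ι : Type*} [CommSemiring K] [Fintype ι]
    [DecidableEq ι] (f : (ι → K) →ₗ[K] K) (v : ι → K) :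
    f v = (fun i => f (Pi.single i 1)) ⬝ᵥ v := by
  conv_lhs => rw [← univ_sum_single v]
  simp only [map_sum, dotProduct]
  refine sum_congr rfl fun i _ => ?_
  rw [mul_comm, ← smul_eq_mul, ← map_smul, ← Pi.single_smul, smul_eq_mul, mul_one]

theorem Submodule.exists_ne_zero_forall_dotProduct_eq_zero {K ι : Type*} [Field K] [Fintype ι]
    {W : Submodule K (ι → K)} (hW : W ≠ ⊤) : ∃ c : ι → K, c ≠ 0 ∧ ∀ v ∈ W, c ⬝ᵥ v = 0 := by
  classical
  obtain ⟨f, hf, hWf⟩ := W.exists_le_ker_of_lt_top (lt_top_iff_ne_top.2 hW)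
  refine ⟨fun i => f (Pi.single i 1), fun hc => hf ?_, fun v hv => ?_⟩
  · refine LinearMap.ext fun v => ?_
    rw [f.apply_eq_dotProduct, hc, zero_dotProduct, LinearMap.zero_apply]
  · rw [← f.apply_eq_dotProduct]
    exact hWf hv

theorem exists_injective_dotProduct {ι : Type*} [Finite ι] {p : ℕ} {x : ι → Fin p → ℝ}
    (hx : Function.Injective x) : ∃ a : Fin p → ℝ, Function.Injective fun i => a ⬝ᵥ x i := by
  classical
  obtain ⟨f, hf⟩ := Module.exists_dual_forall_apply_ne_zero (K := ℝ)
    (fun ij : {ij : ι × ι // ij.1 ≠ ij.2} => x ij.1.1 - x ij.1.2)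
    fun ij => sub_ne_zero.2 (hx.ne ij.2)
  refine ⟨fun k => f (Pi.single k 1), fun i j hij => by_contra fun hne => ?_⟩
  apply hf ⟨(i, j), hne⟩
  rw [map_sub, f.apply_eq_dotProduct, f.apply_eq_dotProduct]
  exact sub_eq_zero.2 hij

theorem Submodule.mem_of_forall_sum_pow_smul_mem {K M : Type*} [Field K] [Infinite K]
    [AddCommGroup M] [Module K M] (N : Submodule K M) {n : ℕ} {w : ℕ → M}
    (h : ∀ s : K, ∑ j ∈ range (n + 1), s ^ j • w j ∈ N) {j : ℕ} (hj : j ≤ n) : w j ∈ N := by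
  by_contra hw
  obtain ⟨f, hfw, hNf⟩ := Submodule.exists_le_ker_of_notMem hw
  have hzero : ∑ k ∈ range (n + 1), C (f (w k)) * X ^ k = 0 := Polynomial.funext fun s => by
    have := hNf (h s)
    rw [LinearMap.mem_ker, map_sum] at this
    simp only [map_smul, smul_eq_mul] at this
    simp only [eval_finsetSum, eval_mul, eval_C, eval_pow, eval_X, eval_zero]
    rw [← this]
    exact sum_congr rfl fun k _ => mul_comm _ _
  apply hfw
  simpa [finsetSum_coeff, coeff_C_mul_X_pow, Nat.lt_succ_iff.2 hj] using
    congrArg (coeff · j) hzero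

theorem Submodule.mul_mem_of_forall_aeval_mem {K A : Type*} [Field K] [CharZero K] [CommRing A]
    [Algebra K A] {W N : Submodule K A} {P : K[X]} (hP : 2 ≤ P.natDegree) (h1 : 1 ∈ W)
    (hWN : ∀ v ∈ W, aeval v P ∈ N) {u v : A} (hu : u ∈ W) (hv : v ∈ W) : u * v ∈ N := by
  set m := P.natDegree
  -- `v ^ m` is the top coefficient of `s ↦ P (s • v)`, and `v ^ 2` one of `s ↦ (s • 1 + v) ^ m`.
  have hpow : ∀ v ∈ W, v ^ m ∈ N := by
    intro v hv
    have h : ∀ s : K, ∑ j ∈ range (m + 1), s ^ j • (P.coeff j • v ^ j) ∈ N := fun s => by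
      simpa [aeval_eq_sum_range, _root_.smul_pow, smul_comm (P.coeff _)] using
        hWN (s • v) (W.smul_mem s hv)
    exact (N.smul_mem_iff (leadingCoeff_ne_zero.2 (by rintro rfl; simp [m] at hP))).1
      (N.mem_of_forall_sum_pow_smul_mem h le_rfl)
  have hsq : ∀ v ∈ W, v ^ 2 ∈ N := by
    intro v hv
    have h : ∀ s : K, ∑ j ∈ range (m + 1), s ^ j • ((m.choose j : K) • v ^ (m - j)) ∈ N :=
      fun s => by
        convert hpow (s • 1 + v) (W.add_mem (W.smul_mem s h1) hv) using 1
        rw [add_pow]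
        refine sum_congr rfl fun j _ => ?_
        simp [Algebra.smul_def]
        ring
    have hchoose : (m.choose (m - 2) : K) ≠ 0 := by
      exact_mod_cast (Nat.choose_pos (Nat.sub_le m 2)).ne'
    have := N.mem_of_forall_sum_pow_smul_mem h (Nat.sub_le m 2)
    rwa [Nat.sub_sub_self hP, N.smul_mem_iff hchoose] at this
  have hpol : u * v = (2 : K)⁻¹ • ((u + v) ^ 2 - u ^ 2 - v ^ 2) := by
    rw [eq_inv_smul_iff₀ two_ne_zero, two_smul]
    ring
  rw [hpol]
  exact N.smul_mem _ (N.sub_mem (N.sub_mem (hsq _ (W.add_mem hu hv)) (hsq u hu)) (hsq v hv))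

theorem Submodule.eq_top_of_forall_pow_mem {ι K : Type*} [Fintype ι] [Field K]
    {W : Submodule K (ι → K)} {t : ι → K} (ht : Function.Injective t)
    (h : ∀ j < Fintype.card ι, t ^ j ∈ W) : W = ⊤ := by
  classical
  have hle : degreeLT K (Fintype.card ι) ≤ W.comap (aeval t).toLinearMap := by
    rw [degreeLT_eq_span_X_pow, Submodule.span_le]
    intro _ hx
    obtain ⟨j, hj, rfl⟩ := mem_image.1 hx
    simpa using h j (mem_range.1 hj)
  rw [eq_top_iff']
  intro z
  have hz : aeval t (Lagrange.interpolate univ t z) = z := by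
    ext i
    rw [aeval_pi_apply₂, coe_aeval_eq_eval, Lagrange.eval_interpolate_at_node _ ht.injOn
      (mem_univ i)]
  rw [← hz]
  exact hle (mem_degreeLT.2 (card_univ (α := ι) ▸ Lagrange.degree_interpolate_lt z ht.injOn))

theorem Submodule.exists_fin_family_of_forall_mem_span {R M ι : Type*} [Semiring R]
    [AddCommMonoid M] [Module R M] [Finite ι] {A : Set M} {v : ι → M}
    (hv : ∀ r, v r ∈ span R A) : ∃ (n : ℕ) (g : Fin n → M), (∀ j, g j ∈ A) ∧
      ∃ c : ι → Fin n → R, ∀ r, v r = ∑ j, c r j • g j := by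
  choose T hTA hT using fun r => Submodule.mem_span_finite_of_mem_span (hv r)
  obtain ⟨n, g, hg⟩ := (Set.finite_iUnion fun r => (T r).finite_toSet).fin_embedding
  have hgA : Set.range g ⊆ A := hg ▸ Set.iUnion_subset hTA
  have hv' : ∀ r, v r ∈ span R (Set.range g) := fun r =>
    span_mono (hg ▸ Set.subset_iUnion (fun r => (T r : Set M)) r) (hT r)
  choose c hc using fun r => (mem_span_range_iff_exists_fun R).1 (hv' r)
  exact ⟨n, g, fun j => hgA ⟨j, rfl⟩, c, fun r => (hc r).symm⟩

def affineFunctions (p : ℕ) : Submodule ℝ ((Fin p → ℝ) → ℝ) where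
  carrier := {φ | ∃ (w : Fin p → ℝ) (b : ℝ), φ = fun x => w ⬝ᵥ x - b}
  add_mem' := by
    rintro _ _ ⟨w, b, rfl⟩ ⟨w', b', rfl⟩
    exact ⟨w + w', b + b', by ext x; simp [add_dotProduct]; ring⟩
  zero_mem' := ⟨0, 0, by ext; simp⟩
  smul_mem' := by
    rintro c _ ⟨w, b, rfl⟩
    exact ⟨c • w, c * b, by ext x; simp [smul_dotProduct]; ring⟩

-- Scalar functions computed by networks with `ℓ` hidden layers.
def netFunctions (σ : ℝ → ℝ) (p : ℕ) : ℕ → Submodule ℝ ((Fin p → ℝ) → ℝ)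
  | 0 => affineFunctions p
  | ℓ + 1 => Submodule.span ℝ ((σ ∘ ·) '' netFunctions σ p ℓ)

theorem deepNet_of_forall_mem_netFunctions {σ : ℝ → ℝ} {p : ℕ} :
    ∀ (ℓ : ℕ) {q : ℕ} {φ : Fin q → (Fin p → ℝ) → ℝ}, (∀ r, φ r ∈ netFunctions σ p ℓ) →
    DeepNet σ p q (fun x r => φ r x)
  | 0, q, φ, hφ => by
    choose w b hwb using hφ
    convert DeepNet.affine (σ := σ) (Matrix.of w) b using 1
    ext x r
    simp [hwb r, Matrix.mulVec]
  | ℓ + 1, q, φ, hφ => by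
    obtain ⟨n, g, hg, c, hc⟩ := Submodule.exists_fin_family_of_forall_mem_span hφ
    choose f hf hfg using hg
    convert DeepNet.layer (deepNet_of_forall_mem_netFunctions ℓ hf) (Matrix.of c) 0 using 1
    ext x r
    simp [hc r, ← hfg, Matrix.mulVec, dotProduct]

section dataValues

variable {σ : ℝ → ℝ} {d p : ℕ} {x : Fin d → Fin p → ℝ}

variable (σ x) in
def dataValues (ℓ : ℕ) : Submodule ℝ (Fin d → ℝ) :=
  (netFunctions σ p ℓ).map (LinearMap.pi fun i => LinearMap.proj (x i))

theorem mem_dataValues {ℓ : ℕ} {v : Fin d → ℝ} :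
    v ∈ dataValues σ x ℓ ↔ ∃ φ ∈ netFunctions σ p ℓ, (fun i => φ (x i)) = v :=
  Submodule.mem_map

theorem affine_mem_dataValues_zero (w : Fin p → ℝ) (b : ℝ) :
    (fun i => w ⬝ᵥ x i - b) ∈ dataValues σ x 0 :=
  mem_dataValues.2 ⟨_, ⟨w, b, rfl⟩, rfl⟩

theorem comp_mem_dataValues_succ {ℓ : ℕ} {v : Fin d → ℝ} (hv : v ∈ dataValues σ x ℓ) :
    σ ∘ v ∈ dataValues σ x (ℓ + 1) := by
  obtain ⟨φ, hφ, rfl⟩ := mem_dataValues.1 hv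
  exact mem_dataValues.2 ⟨σ ∘ φ, Submodule.subset_span ⟨φ, hφ, rfl⟩, rfl⟩

theorem exists_deepNet_of_dataValues_eq_top {ℓ q : ℕ} (h : dataValues σ x ℓ = ⊤)
    (z : Fin d → Fin q → ℝ) : ∃ g, DeepNet σ p q g ∧ ∀ i, g (x i) = z i := by
  have hz : ∀ r, (fun i => z i r) ∈ dataValues σ x ℓ := fun r => h ▸ Submodule.mem_top
  choose φ hφ hφz using fun r => mem_dataValues.1 (hz r)
  exact ⟨_, deepNet_of_forall_mem_netFunctions ℓ hφ, fun i => funext fun r => congrFun (hφz r) i⟩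

theorem exists_sum_mul_comp_eq_zero_of_dataValues_ne_top (h : dataValues σ x 1 ≠ ⊤)
    (a : Fin p → ℝ) : ∃ c : Fin d → ℝ, c ≠ 0 ∧ ∀ w y, ∑ i, c i * σ (y + w * (a ⬝ᵥ x i)) = 0 := by
  obtain ⟨c, hc, hcW⟩ := Submodule.exists_ne_zero_forall_dotProduct_eq_zero h
  refine ⟨c, hc, fun w y => hcW _ ?_⟩
  convert comp_mem_dataValues_succ (affine_mem_dataValues_zero (σ := σ) (x := x) (w • a) (-y))
    using 1
  ext i
  simp [smul_dotProduct, add_comm]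

theorem one_mem_and_pow_mem_dataValues {P : ℝ[X]} (hσ : σ = P.eval) (hP : 2 ≤ P.natDegree)
    (a : Fin p → ℝ) (k : ℕ) :
    1 ∈ dataValues σ x k ∧ ∀ j ≤ 2 ^ k, (fun i => a ⬝ᵥ x i) ^ j ∈ dataValues σ x k := by
  induction k with
  | zero =>
    have h1 : 1 ∈ dataValues σ x 0 := by
      convert affine_mem_dataValues_zero (σ := σ) (x := x) 0 (-1) using 1
      ext
      simp
    refine ⟨h1, fun j hj => ?_⟩
    rcases Nat.le_one_iff_eq_zero_or_eq_one.1 hj with rfl | rfl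
    · simpa using h1
    · simpa using affine_mem_dataValues_zero (σ := σ) (x := x) a 0
  | succ k ih =>
    obtain ⟨h1, hpow⟩ := ih
    have hmul : ∀ u ∈ dataValues σ x k, ∀ v ∈ dataValues σ x k,
        u * v ∈ dataValues σ x (k + 1) := fun u hu v hv =>
      Submodule.mul_mem_of_forall_aeval_mem hP h1 (fun v hv => by
        simpa [aeval_pi_apply, hσ, Function.comp_def] using comp_mem_dataValues_succ hv) hu hv
    refine ⟨by simpa using hmul 1 h1 1 h1, fun j hj => ?_⟩
    rw [show j = min j (2 ^ k) + (j - min j (2 ^ k)) by omega, pow_add]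
    exact hmul _ (hpow _ (min_le_right _ _)) _ (hpow _ (by rw [pow_succ] at hj; omega))

theorem dataValues_eq_top_of_eq_eval {P : ℝ[X]} (hσ : σ = P.eval) (hP : 2 ≤ P.natDegree)
    {a : Fin p → ℝ} (ha : Function.Injective fun i => a ⬝ᵥ x i) : dataValues σ x d = ⊤ :=
  Submodule.eq_top_of_forall_pow_mem ha fun j hj =>
    (one_mem_and_pow_mem_dataValues hσ hP a d).2 j
      (by simpa using (hj.trans Nat.lt_two_pow_self).le)

end dataValues

/-- **Vector-valued interpolation by deep networks.**
If `σ` is locally integrable and not a.e. equal to an affine function, then any data set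
`(xᵢ, zᵢ)` with `xᵢ ∈ ℝ^p` pairwise distinct and `zᵢ ∈ ℝ^q` can be interpolated by a
feedforward neural network `g : ℝ^p → ℝ^q` with activation `σ`. -/
theorem deep_interpolation_vector_output (d p q : ℕ) (σ : ℝ → ℝ)
    (hσ : LocallyIntegrable σ)
    (haff : ¬ ∃ a b : ℝ, ∀ᵐ t : ℝ, σ t = a * t + b)
    (x : Fin d → Fin p → ℝ) (hx : Function.Injective x) (z : Fin d → Fin q → ℝ) :
    ∃ g : (Fin p → ℝ) → (Fin q → ℝ), DeepNet σ p q g ∧ ∀ i, g (x i) = z i := by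
  obtain ⟨a, ha⟩ := exists_injective_dotProduct hx
  obtain ⟨ℓ, hℓ⟩ : ∃ ℓ, dataValues σ x ℓ = ⊤ := by
    by_cases h1 : dataValues σ x 1 = ⊤
    · exact ⟨1, h1⟩
    obtain ⟨c, hc, hcσ⟩ := exists_sum_mul_comp_eq_zero_of_dataValues_ne_top h1 a
    obtain ⟨P, hP⟩ := exists_polynomial_of_sum_mul_comp_eq_zero
      (fun _ _ => (hσ.integrableOn_isCompact isCompact_uIcc).intervalIntegrable) ha hc hcσ
    have hdeg : 2 ≤ P.natDegree := by
      by_contra! hdeg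
      refine haff ⟨P.coeff 1, P.coeff 0, ae_of_all _ fun s => ?_⟩
      rw [hP]
      conv_lhs => rw [eq_X_add_C_of_natDegree_le_one (by omega : P.natDegree ≤ 1)]
      simp
    exact ⟨d, dataValues_eq_top_of_eq_eval hP hdeg ha⟩
  exact exists_deepNet_of_dataValues_eq_top hℓ z
end
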